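/- arXiv:1812.06288 — 5 statements merged into one kernel-verified Lean document; each statement's English description precedes it below -/
import Mathlib

section
/- In every finite metric space induced by a connected simple graph with at least two vertices (with the shortest-path distance), every closure line consists of exactly two vertices or consists of all the vertices. -/
/-- `v` lies between `u` and `w` in the shortest-path metric of the graph `G`. -/
def gBtw {V : Type*} (G : SimpleGraph V) (u v w : V) : Prop :=
  u ≠ v ∧ v ≠ w ∧ u ≠ w ∧ G.dist u v + G.dist v w = G.dist u w

/-- The line determined by `x` and `y` in the graph `G`. -/
def gLine {V : Type*} (G : SimpleGraph V) (x y : V) : Set V :=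
  {x, y} ∪ {z | gBtw G x z y ∨ gBtw G z x y ∨ gBtw G x y z}

/-- The closure line `C(xy)` in the graph `G`: the smallest superset of `L(xy)` closed
under taking lines through pairs of its points. -/
def gClosureLine {V : Type*} (G : SimpleGraph V) (x y : V) : Set V :=
  ⋂₀ {S : Set V | gLine G x y ⊆ S ∧ ∀ u v : V, u ∈ S → v ∈ S → u ≠ v → gLine G u v ⊆ S}

section Aux

variable {V : Type*} {G : SimpleGraph V}

lemma gBtw_symm {u v w : V} (h : gBtw G u v w) : gBtw G w v u := by
  obtain ⟨h1, h2, h3, h4⟩ := h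
  refine ⟨h2.symm, h1.symm, h3.symm, ?_⟩
  have c1 := SimpleGraph.dist_comm (G := G) (u := w) (v := v)
  have c2 := SimpleGraph.dist_comm (G := G) (u := v) (v := u)
  have c3 := SimpleGraph.dist_comm (G := G) (u := w) (v := u)
  omega

lemma gLine_comm (x y : V) : gLine G x y = gLine G y x := by
  have key : ∀ a b : V, gLine G a b ⊆ gLine G b a := by
    intro a b z hz
    rcases hz with hz | hz
    · rcases hz with hz | hz
      · exact Or.inl (Or.inr hz)
      · exact Or.inl (Or.inl hz)
    · rcases hz with hz | hz | hz
      · exact Or.inr (Or.inl (gBtw_symm hz))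
      · exact Or.inr (Or.inr (Or.inr (gBtw_symm hz)))
      · exact Or.inr (Or.inr (Or.inl (gBtw_symm hz)))
  exact le_antisymm (key x y) (key y x)

lemma gLine_subset_gClosureLine (x y : V) : gLine G x y ⊆ gClosureLine G x y := by
  intro z hz
  rw [gClosureLine, Set.mem_sInter]
  exact fun S hS => hS.1 hz

lemma gClosureLine_closed {x y u v : V} (hu : u ∈ gClosureLine G x y)
    (hv : v ∈ gClosureLine G x y) (huv : u ≠ v) : gLine G u v ⊆ gClosureLine G x y := by
  intro z hz
  rw [gClosureLine, Set.mem_sInter]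
  intro S hS
  exact hS.2 u v (Set.mem_sInter.mp hu S hS) (Set.mem_sInter.mp hv S hS) huv hz

lemma step (hconn : G.Connected) {u w : V} {n : ℕ} (h : G.dist u w = n + 1) :
    ∃ v, G.Adj u v ∧ G.dist v w = n := by
  obtain ⟨p, hp⟩ := hconn.exists_walk_length_eq_dist u w
  cases p with
  | nil => rw [h] at hp; simp at hp
  | @cons _ v _ hadj q =>
    refine ⟨v, hadj, ?_⟩
    have h1 : G.dist v w ≤ n := by
      have := SimpleGraph.dist_le q
      rw [h] at hp
      simp only [SimpleGraph.Walk.length_cons] at hp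
      omega
    have h2 : G.dist u v ≤ 1 := by
      have := SimpleGraph.dist_le (SimpleGraph.Walk.cons hadj SimpleGraph.Walk.nil)
      simpa using this
    have h3 := hconn.dist_triangle (u := u) (v := v) (w := w)
    omega

end Aux

theorem stmt_1 (V : Type*) [Fintype V] (G : SimpleGraph V) (hconn : G.Connected)
    (h2 : 2 ≤ Fintype.card V) :
    ∀ x y : V, x ≠ y →
      gClosureLine G x y = {x, y} ∨ gClosureLine G x y = Set.univ := by
  intro x y hxy
  by_cases hL : gLine G x y ⊆ {x, y}
  · left
    apply le_antisymm
    · apply Set.sInter_subset_of_mem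
      refine ⟨hL, ?_⟩
      intro u v hu hv huv
      rcases hu with rfl | rfl <;> rcases hv with rfl | rfl
      · exact absurd rfl huv
      · exact hL
      · rw [gLine_comm]; exact hL
      · exact absurd rfl huv
    · exact fun t ht => gLine_subset_gClosureLine x y (Or.inl ht)
  · right
    set C := gClosureLine G x y with hC
    have hxC : x ∈ C := gLine_subset_gClosureLine x y (Or.inl (Or.inl rfl))
    have hyC : y ∈ C := gLine_subset_gClosureLine x y (Or.inl (Or.inr rfl))
    -- extract a pair of points of C at distance ≥ 2
    obtain ⟨z, hzL, hzxy⟩ : ∃ z, z ∈ gLine G x y ∧ z ∉ ({x, y} : Set V) := by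
      rcases Set.not_subset.mp hL with ⟨z, h1, h2⟩
      exact ⟨z, h1, h2⟩
    have hzC : z ∈ C := gLine_subset_gClosureLine x y hzL
    have hpair : ∃ u w : V, u ∈ C ∧ w ∈ C ∧ 2 ≤ G.dist u w := by
      rcases hzL with hz | hz
      · exact absurd hz hzxy
      · rcases hz with hz | hz | hz
        · obtain ⟨h1, h2, h3, h4⟩ := hz
          have p1 := hconn.pos_dist_of_ne h1
          have p2 := hconn.pos_dist_of_ne h2
          exact ⟨x, y, hxC, hyC, by omega⟩
        · obtain ⟨h1, h2, h3, h4⟩ := hz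
          have p1 := hconn.pos_dist_of_ne h1
          have p2 := hconn.pos_dist_of_ne h2
          exact ⟨z, y, hzC, hyC, by omega⟩
        · obtain ⟨h1, h2, h3, h4⟩ := hz
          have p1 := hconn.pos_dist_of_ne h1
          have p2 := hconn.pos_dist_of_ne h2
          exact ⟨x, z, hxC, hzC, by omega⟩
    obtain ⟨u, w, huC, hwC, hduw⟩ := hpair
    obtain ⟨n, hn⟩ : ∃ n, G.dist u w = n + 2 := ⟨G.dist u w - 2, by omega⟩
    have huw : u ≠ w := by
      intro h; rw [h, SimpleGraph.dist_self] at hn; omega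
    -- find b with u ~ b, dist b w = n + 1
    obtain ⟨b, hub, hbw⟩ := step hconn (show G.dist u w = (n + 1) + 1 by omega)
    have hdub : G.dist u b = 1 := SimpleGraph.dist_eq_one_iff_adj.mpr hub
    have hbne : b ≠ w := by
      intro h; rw [h, SimpleGraph.dist_self] at hbw; omega
    have hbC : b ∈ C := by
      refine gClosureLine_closed huC hwC huw ?_
      exact Or.inr (Or.inl ⟨hub.ne, hbne, huw, by omega⟩)
    -- find c with b ~ c, dist c w = n
    obtain ⟨c, hbc, hcw⟩ := step hconn hbw
    have hdbc : G.dist b c = 1 := SimpleGraph.dist_eq_one_iff_adj.mpr hbc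
    have hduc : G.dist u c = 2 := by
      have hle : G.dist u c ≤ G.dist u b + G.dist b c := hconn.dist_triangle
      have hge : G.dist u w ≤ G.dist u c + G.dist c w := hconn.dist_triangle
      omega
    have hcC : c ∈ C := by
      rcases Nat.eq_zero_or_pos n with h0 | hpos
      · have : c = w := hconn.dist_eq_zero_iff.mp (by omega)
        rwa [this]
      · refine gClosureLine_closed huC hwC huw ?_
        have hcw' : c ≠ w := by
          intro h; rw [h, SimpleGraph.dist_self] at hcw; omega
        have hucne : u ≠ c := by
          intro h; rw [h, SimpleGraph.dist_self] at hduc; omega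
        exact Or.inr (Or.inl ⟨hucne, hcw', huw, by omega⟩)
    -- the configuration: a := u, b, c with dist u b = 1, dist b c = 1, dist u c = 2
    have hub_ne : u ≠ b := hub.ne
    have hbc_ne : b ≠ c := hbc.ne
    have huc_ne : u ≠ c := by
      intro h; rw [h, SimpleGraph.dist_self] at hduc; omega
    -- neighbors of b are in C
    have hnbr : ∀ z', G.dist b z' = 1 → z' ∈ C := by
      intro z' hz'
      have hbz' : b ≠ z' := by
        intro h; rw [h, SimpleGraph.dist_self] at hz'; omega
      by_cases hza : z' = u
      · rwa [hza]
      by_cases hzc : z' = c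
      · rwa [hzc]
      have huz' : u ≠ z' := fun h => hza h.symm
      have hcz' : c ≠ z' := fun h => hzc h.symm
      have hduz : G.dist u z' ≤ 2 := by
        have := hconn.dist_triangle (u := u) (v := b) (w := z')
        omega
      have hduz1 : 1 ≤ G.dist u z' := hconn.pos_dist_of_ne huz'
      rcases Nat.lt_or_ge (G.dist u z') 2 with h | h
      · -- dist u z' = 1 ; look at dist c z'
        have hduz' : G.dist u z' = 1 := by omega
        have hdcz : G.dist c z' ≤ 2 := by
          have t := hconn.dist_triangle (u := c) (v := b) (w := z')
          have c1 := SimpleGraph.dist_comm (G := G) (u := c) (v := b)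
          omega
        have hdcz1 : 1 ≤ G.dist c z' := hconn.pos_dist_of_ne hcz'
        rcases Nat.lt_or_ge (G.dist c z') 2 with h' | h'
        · -- dist c z' = 1 : z' between u and c
          refine gClosureLine_closed huC hcC huc_ne ?_
          refine Or.inr (Or.inl ⟨huz', hzc, huc_ne, ?_⟩)
          have c1 := SimpleGraph.dist_comm (G := G) (u := z') (v := c)
          omega
        · -- dist c z' = 2 : gBtw c b z'
          have hdcz2 : G.dist c z' = 2 := by omega
          refine gClosureLine_closed hcC hbC (Ne.symm hbc_ne) ?_
          refine Or.inr (Or.inr (Or.inr ⟨Ne.symm hbc_ne, hbz', hcz', ?_⟩))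
          have c1 := SimpleGraph.dist_comm (G := G) (u := c) (v := b)
          omega
      · -- dist u z' = 2 : gBtw u b z'
        have hduz2 : G.dist u z' = 2 := by omega
        refine gClosureLine_closed huC hbC hub_ne ?_
        exact Or.inr (Or.inr (Or.inr ⟨hub_ne, hbz', huz', by omega⟩))
    -- induction on distance from b
    have key : ∀ k z', G.dist b z' ≤ k → z' ∈ C := by
      intro k
      induction k with
      | zero =>
        intro z' hz'
        have : b = z' := hconn.dist_eq_zero_iff.mp (Nat.le_zero.mp hz')
        rwa [← this]
      | succ k ih =>
        intro z' hz'
        rcases Nat.lt_or_ge (G.dist b z') (k + 1) with h | h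
        · exact ih z' (by omega)
        · have hd : G.dist b z' = k + 1 := by omega
          rcases Nat.eq_zero_or_pos k with h0 | hk
          · exact hnbr z' (by omega)
          · have hd' : G.dist z' b = k + 1 := by rw [SimpleGraph.dist_comm]; omega
            obtain ⟨v, hzv, hvb⟩ := step hconn hd'
            have hvC : v ∈ C := ih v (by rw [SimpleGraph.dist_comm]; omega)
            have hbv : b ≠ v := by
              intro hbv; rw [← hbv, SimpleGraph.dist_self] at hvb; omega
            have hbz : b ≠ z' := by
              intro hbz; rw [hbz, SimpleGraph.dist_self] at hd; omega
            refine gClosureLine_closed hbC hvC hbv ?_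
            refine Or.inr (Or.inr (Or.inr ⟨hbv, Ne.symm hzv.ne, hbz, ?_⟩))
            have c1 := SimpleGraph.dist_comm (G := G) (u := b) (v := v)
            have c2 := SimpleGraph.dist_comm (G := G) (u := v) (v := z')
            have hdvz : G.dist z' v = 1 := SimpleGraph.dist_eq_one_iff_adj.mpr hzv
            omega
    rw [Set.eq_univ_iff_forall]
    exact fun z' => key (G.dist b z') z' le_rfl
end

section
/- For every integer n greater than 5, there is a finite metric space on n points in which there are precisely 7 distinct closure lines and every closure line consists of at most n − 2 points. -/
/-- `v` lies between `u` and `w`: pairwise distinct and the triangle inequality is tight. -/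
def MBtw {V : Type*} [MetricSpace V] (u v w : V) : Prop :=
  u ≠ v ∧ v ≠ w ∧ u ≠ w ∧ dist u v + dist v w = dist u w

/-- The line determined by `x` and `y`. -/
def mLine {V : Type*} [MetricSpace V] (x y : V) : Set V :=
  {x, y} ∪ {z | MBtw x z y ∨ MBtw z x y ∨ MBtw x y z}

/-- The closure line `C(xy)`: the smallest superset of `L(xy)` closed under taking lines
through pairs of its points. -/
def mClosureLine {V : Type*} [MetricSpace V] (x y : V) : Set V :=
  ⋂₀ {S : Set V | mLine x y ⊆ S ∧ ∀ u v : V, u ∈ S → v ∈ S → u ≠ v → mLine u v ⊆ S}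

def Dmat (a b : ℕ) : ℕ :=
  match a, b with
  | 0,0 => 2 | 0,1 => 1 | 0,2 => 2 | 0,3 => 2 | 0,4 => 3 | 0,5 => 3
  | 1,0 => 1 | 1,1 => 2 | 1,2 => 2 | 1,3 => 2 | 1,4 => 3 | 1,5 => 3
  | 2,0 => 2 | 2,1 => 2 | 2,2 => 2 | 2,3 => 2 | 2,4 => 1 | 2,5 => 2
  | 3,0 => 2 | 3,1 => 2 | 3,2 => 2 | 3,3 => 2 | 3,4 => 2 | 3,5 => 1
  | 4,0 => 3 | 4,1 => 3 | 4,2 => 1 | 4,3 => 2 | 4,4 => 2 | 4,5 => 2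
  | 5,0 => 3 | 5,1 => 3 | 5,2 => 2 | 5,3 => 1 | 5,4 => 2 | 5,5 => 2
  | _,_ => 2

def Pat (a b c : ℕ) : Prop :=
  (a = 0 ∧ b = 1 ∧ c = 0) ∨ (a ≤ 1 ∧ b = 2 ∧ c = 4) ∨ (a = 4 ∧ b = 2 ∧ c ≤ 1) ∨
  (a ≤ 1 ∧ b = 3 ∧ c = 5) ∨ (a = 5 ∧ b = 3 ∧ c ≤ 1)

instance (a b c : ℕ) : Decidable (Pat a b c) := by unfold Pat; infer_instance

lemma key : ∀ a b c : Fin 6,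
    ((a:ℕ) = b → (a:ℕ) = 0) → ((b:ℕ) = c → (b:ℕ) = 0) → ((a:ℕ) = c → (a:ℕ) = 0) →
    (Dmat a b + Dmat b c = Dmat a c ↔ Pat a b c) := by decide

lemma Dmat_comm : ∀ a b : Fin 6, Dmat a b = Dmat b a := by decide
lemma Dmat_pos : ∀ a b : Fin 6, 0 < Dmat a b := by decide
lemma Dmat_tri : ∀ a b c : Fin 6, Dmat a c ≤ Dmat a b + Dmat b c := by decide

def lab (n : ℕ) (i : Fin n) : ℕ := i.val - (n - 6)

lemma lab_le (n : ℕ) (i : Fin n) : lab n i ≤ 5 := by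
  have := i.isLt; unfold lab; omega

def labF (n : ℕ) (i : Fin n) : Fin 6 := ⟨lab n i, by have := lab_le n i; omega⟩

noncomputable def dfun (n : ℕ) (i j : Fin n) : ℝ :=
  if i = j then 0 else (Dmat (lab n i) (lab n j) : ℝ)


lemma dfun_comm (n : ℕ) (i j : Fin n) : dfun n i j = dfun n j i := by
  unfold dfun
  rcases eq_or_ne i j with h | h
  · simp [h]
  · rw [if_neg h, if_neg (Ne.symm h)]
    have := Dmat_comm (labF n i) (labF n j)
    simp only [labF] at this
    rw [this]

lemma dfun_nonneg (n : ℕ) (i j : Fin n) : 0 ≤ dfun n i j := by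
  unfold dfun
  rcases eq_or_ne i j with h | h
  · simp [h]
  · rw [if_neg h]; positivity

lemma dfun_tri (n : ℕ) (i j k : Fin n) : dfun n i k ≤ dfun n i j + dfun n j k := by
  rcases eq_or_ne i k with rfl | hik
  · have h1 := dfun_nonneg n i j
    have h2 := dfun_nonneg n j i
    have h0 : dfun n i i = 0 := by simp [dfun]
    rw [h0]
    positivity
  · rcases eq_or_ne i j with rfl | hij
    · have h0 : dfun n i i = 0 := by simp [dfun]
      rw [h0]; simp
    · rcases eq_or_ne j k with rfl | hjk
      · have h0 : dfun n j j = 0 := by simp [dfun]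
        rw [h0]; simp
      · unfold dfun
        rw [if_neg hij, if_neg hjk, if_neg hik]
        have := Dmat_tri (labF n i) (labF n j) (labF n k)
        simp only [labF] at this
        exact_mod_cast this

noncomputable def M (n : ℕ) : MetricSpace (Fin n) where
  dist := dfun n
  dist_self i := by simp [dfun]
  dist_comm := dfun_comm n
  dist_triangle := dfun_tri n
  eq_of_dist_eq_zero := by
    intro i j h
    by_contra hne
    have h' : dfun n i j = 0 := h
    unfold dfun at h'
    rw [if_neg hne] at h'
    have h1 := Dmat_pos (labF n i) (labF n j)
    have h2 : (0:ℝ) < Dmat (lab n i) (lab n j) := by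
      simp only [labF] at h1; exact_mod_cast h1
    linarith
  edist_dist x y := rfl

lemma lab_inj {n : ℕ} (hn : 5 < n) {i j : Fin n} (h : lab n i = lab n j)
    (h1 : 1 ≤ lab n i) : i = j := by
  have hi := i.isLt; have hj := j.isLt
  unfold lab at h h1
  exact Fin.ext (by omega)

lemma ne_of_lab {n : ℕ} {i j : Fin n} (h : lab n i ≠ lab n j) : i ≠ j :=
  fun e => h (by rw [e])

lemma key' {n : ℕ} (hn : 5 < n) {u v w : Fin n} (h1 : u ≠ v) (h2 : v ≠ w) (h3 : u ≠ w) :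
    (Dmat (lab n u) (lab n v) + Dmat (lab n v) (lab n w) = Dmat (lab n u) (lab n w)) ↔
      Pat (lab n u) (lab n v) (lab n w) := by
  have h := key (labF n u) (labF n v) (labF n w) ?_ ?_ ?_
  · simpa only [labF] using h
  · simp only [labF]
    intro h; by_contra h0; exact h1 (lab_inj hn h (by omega))
  · simp only [labF]
    intro h; by_contra h0; exact h2 (lab_inj hn h (by omega))
  · simp only [labF]
    intro h; by_contra h0; exact h3 (lab_inj hn h (by omega))

lemma mbtw_iff {n : ℕ} (hn : 5 < n) {u v w : Fin n} :
    @MBtw _ (M n) u v w ↔ (u ≠ v ∧ v ≠ w ∧ u ≠ w ∧ Pat (lab n u) (lab n v) (lab n w)) := by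
  constructor
  · rintro ⟨h1, h2, h3, hd⟩
    refine ⟨h1, h2, h3, ?_⟩
    have hd' : dfun n u v + dfun n v w = dfun n u w := hd
    unfold dfun at hd'
    rw [if_neg h1, if_neg h2, if_neg h3] at hd'
    exact (key' hn h1 h2 h3).1 (by exact_mod_cast hd')
  · rintro ⟨h1, h2, h3, hp⟩
    refine ⟨h1, h2, h3, ?_⟩
    show dfun n u v + dfun n v w = dfun n u w
    unfold dfun
    rw [if_neg h1, if_neg h2, if_neg h3]
    exact_mod_cast (key' hn h1 h2 h3).2 hp

lemma mbtw_pat {n : ℕ} (hn : 5 < n) {u v w : Fin n} (h : @MBtw _ (M n) u v w) :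
    Pat (lab n u) (lab n v) (lab n w) := ((mbtw_iff hn).1 h).2.2.2

lemma mem_mLine {n : ℕ} {x y z : Fin n} :
    z ∈ @mLine _ (M n) x y ↔
      z = x ∨ z = y ∨ @MBtw _ (M n) x z y ∨ @MBtw _ (M n) z x y ∨ @MBtw _ (M n) x y z := by
  simp [mLine, Set.mem_union, Set.mem_insert_iff, Set.mem_setOf_eq, or_assoc]

-- special points
def px (n : ℕ) (hn : 5 < n) : Fin n := ⟨0, by omega⟩
def pa (n : ℕ) (hn : 5 < n) : Fin n := ⟨n-5, by omega⟩
def pb (n : ℕ) (hn : 5 < n) : Fin n := ⟨n-4, by omega⟩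
def pc (n : ℕ) (hn : 5 < n) : Fin n := ⟨n-3, by omega⟩
def pp (n : ℕ) (hn : 5 < n) : Fin n := ⟨n-2, by omega⟩
def pq (n : ℕ) (hn : 5 < n) : Fin n := ⟨n-1, by omega⟩

lemma lab_px (n : ℕ) (hn : 5 < n) : lab n (px n hn) = 0 := by unfold lab px; simp
lemma lab_pa (n : ℕ) (hn : 5 < n) : lab n (pa n hn) = 1 := by unfold lab pa; simp; omega
lemma lab_pb (n : ℕ) (hn : 5 < n) : lab n (pb n hn) = 2 := by unfold lab pb; simp; omega
lemma lab_pc (n : ℕ) (hn : 5 < n) : lab n (pc n hn) = 3 := by unfold lab pc; simp; omega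
lemma lab_pp (n : ℕ) (hn : 5 < n) : lab n (pp n hn) = 4 := by unfold lab pp; simp; omega
lemma lab_pq (n : ℕ) (hn : 5 < n) : lab n (pq n hn) = 5 := by unfold lab pq; simp; omega

-- the unique point of a given label ≥ 1
lemma eq_of_lab {n : ℕ} (hn : 5 < n) {i j : Fin n} (hi : lab n i = lab n j)
    (h1 : 1 ≤ lab n j) : i = j := lab_inj hn hi (by omega)

-- the seven sets
def HS (n : ℕ) : Set (Fin n) := {i | lab n i ≤ 1}
def BP (n : ℕ) : Set (Fin n) := {i | lab n i ≤ 1 ∨ lab n i = 2 ∨ lab n i = 4}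
def CQ (n : ℕ) : Set (Fin n) := {i | lab n i ≤ 1 ∨ lab n i = 3 ∨ lab n i = 5}

lemma hs_closed {n : ℕ} (hn : 5 < n) (u v : Fin n) (hu : u ∈ HS n) (hv : v ∈ HS n) :
    @mLine _ (M n) u v ⊆ HS n := by
  intro z hz
  simp only [HS, Set.mem_setOf_eq] at hu hv ⊢
  rw [mem_mLine] at hz
  rcases hz with rfl | rfl | h | h | h
  · exact hu
  · exact hv
  all_goals (have hp := mbtw_pat hn h; unfold Pat at hp; omega)

lemma bp_closed {n : ℕ} (hn : 5 < n) (u v : Fin n) (hu : u ∈ BP n) (hv : v ∈ BP n) :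
    @mLine _ (M n) u v ⊆ BP n := by
  intro z hz
  simp only [BP, Set.mem_setOf_eq] at hu hv ⊢
  rw [mem_mLine] at hz
  rcases hz with rfl | rfl | h | h | h
  · exact hu
  · exact hv
  all_goals (have hp := mbtw_pat hn h; unfold Pat at hp; omega)

lemma cq_closed {n : ℕ} (hn : 5 < n) (u v : Fin n) (hu : u ∈ CQ n) (hv : v ∈ CQ n) :
    @mLine _ (M n) u v ⊆ CQ n := by
  intro z hz
  simp only [CQ, Set.mem_setOf_eq] at hu hv ⊢
  rw [mem_mLine] at hz
  rcases hz with rfl | rfl | h | h | h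
  · exact hu
  · exact hv
  all_goals (have hp := mbtw_pat hn h; unfold Pat at hp; omega)

/-- pairs among labels {2,3,4,5} other than {2,4} and {3,5} have trivial lines -/
lemma small_line {n : ℕ} (hn : 5 < n) {u v : Fin n} (hu : 2 ≤ lab n u) (hv : 2 ≤ lab n v)
    (h24 : ¬(lab n u = 2 ∧ lab n v = 4)) (h42 : ¬(lab n u = 4 ∧ lab n v = 2))
    (h35 : ¬(lab n u = 3 ∧ lab n v = 5)) (h53 : ¬(lab n u = 5 ∧ lab n v = 3)) :
    @mLine _ (M n) u v ⊆ ({u, v} : Set (Fin n)) := by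
  intro z hz
  rw [mem_mLine] at hz
  simp only [Set.mem_insert_iff, Set.mem_singleton_iff]
  rcases hz with rfl | rfl | h | h | h
  · exact Or.inl rfl
  · exact Or.inr rfl
  all_goals (have hp := mbtw_pat hn h; unfold Pat at hp; omega)

lemma clA {n : ℕ} (hn : 5 < n) {x y : Fin n} (hx : lab n x ≤ 1) (hy : lab n y ≤ 1)
    (hxy : x ≠ y) : @mClosureLine _ (M n) x y = HS n := by
  apply Set.Subset.antisymm
  · exact Set.sInter_subset_of_mem
      ⟨hs_closed hn x y hx hy, fun u v hu hv _ => hs_closed hn u v hu hv⟩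
  · intro z hz
    simp only [mClosureLine, Set.mem_sInter]
    rintro T ⟨hline, hcl⟩
    have hxT : x ∈ T := hline (mem_mLine.2 (Or.inl rfl))
    have hyT : y ∈ T := hline (mem_mLine.2 (Or.inr (Or.inl rfl)))
    have hpa : pa n hn ∈ T := by
      by_cases h1 : lab n x = 1
      · have : x = pa n hn := eq_of_lab hn (by rw [lab_pa]; exact h1) (by rw [lab_pa])
        rwa [← this]
      · by_cases h2 : lab n y = 1
        · have : y = pa n hn := eq_of_lab hn (by rw [lab_pa]; exact h2) (by rw [lab_pa])
          rwa [← this]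
        · have hx0 : lab n x = 0 := by omega
          have hy0 : lab n y = 0 := by omega
          apply hline
          rw [mem_mLine]
          refine Or.inr (Or.inr (Or.inl ?_))
          exact (mbtw_iff hn).2 ⟨ne_of_lab (by rw [lab_pa]; omega),
            ne_of_lab (by rw [lab_pa]; omega), hxy, by unfold Pat; rw [lab_pa]; omega⟩
    obtain ⟨w, hwT, hw0⟩ : ∃ w, w ∈ T ∧ lab n w = 0 := by
      by_cases h1 : lab n x = 0
      · exact ⟨x, hxT, h1⟩
      · have : lab n y = 0 := by
          by_contra h2
          exact hxy (lab_inj hn (by omega) (by omega))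
        exact ⟨y, hyT, this⟩
    simp only [HS, Set.mem_setOf_eq] at hz
    by_cases hz1 : lab n z = 1
    · have : z = pa n hn := eq_of_lab hn (by rw [lab_pa]; exact hz1) (by rw [lab_pa])
      rwa [this]
    · have hz0 : lab n z = 0 := by omega
      by_cases hzw : z = w
      · rwa [hzw]
      · have hwa : w ≠ pa n hn := ne_of_lab (by rw [lab_pa]; omega)
        apply hcl w (pa n hn) hwT hpa hwa
        rw [mem_mLine]
        refine Or.inr (Or.inr (Or.inr (Or.inr ?_)))
        exact (mbtw_iff hn).2 ⟨hwa, ne_of_lab (by rw [lab_pa]; omega), Ne.symm hzw,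
          by unfold Pat; rw [lab_pa]; omega⟩

lemma clBP {n : ℕ} (hn : 5 < n) {x y : Fin n} (hx : x ∈ BP n) (hy : y ∈ BP n)
    (hxy : x ≠ y) (hh : ¬(lab n x ≤ 1 ∧ lab n y ≤ 1)) :
    @mClosureLine _ (M n) x y = BP n := by
  apply Set.Subset.antisymm
  · exact Set.sInter_subset_of_mem
      ⟨bp_closed hn x y hx hy, fun u v hu hv _ => bp_closed hn u v hu hv⟩
  · intro z hz
    simp only [mClosureLine, Set.mem_sInter]
    rintro T ⟨hline, hcl⟩
    have hxT : x ∈ T := hline (mem_mLine.2 (Or.inl rfl))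
    have hyT : y ∈ T := hline (mem_mLine.2 (Or.inr (Or.inl rfl)))
    simp only [BP, Set.mem_setOf_eq] at hx hy
    have hbp : pb n hn ∈ T ∧ pp n hn ∈ T := by
      by_cases hx2 : lab n x = 2
      · have hxb : x = pb n hn := eq_of_lab hn (by rw [lab_pb]; exact hx2) (by rw [lab_pb]; omega)
        refine ⟨hxb ▸ hxT, ?_⟩
        by_cases hy4 : lab n y = 4
        · have hyp : y = pp n hn := eq_of_lab hn (by rw [lab_pp]; exact hy4) (by rw [lab_pp]; omega)
          exact hyp ▸ hyT
        · have hy2' : lab n y ≠ 2 := fun h => hxy (lab_inj hn (by omega) (by omega))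
          have hy1 : lab n y ≤ 1 := by omega
          apply hline
          rw [mem_mLine]
          refine Or.inr (Or.inr (Or.inr (Or.inl ?_)))
          exact (mbtw_iff hn).2 ⟨ne_of_lab (by rw [lab_pp]; omega),
            hxy, ne_of_lab (by rw [lab_pp]; omega),
            by unfold Pat; rw [lab_pp]; omega⟩
      · by_cases hx4 : lab n x = 4
        · have hxp : x = pp n hn := eq_of_lab hn (by rw [lab_pp]; exact hx4) (by rw [lab_pp]; omega)
          refine ⟨?_, hxp ▸ hxT⟩
          by_cases hy2 : lab n y = 2
          · have hyb : y = pb n hn := eq_of_lab hn (by rw [lab_pb]; exact hy2) (by rw [lab_pb]; omega)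
            exact hyb ▸ hyT
          · have hy4' : lab n y ≠ 4 := fun h => hxy (lab_inj hn (by omega) (by omega))
            have hy1 : lab n y ≤ 1 := by omega
            apply hline
            rw [mem_mLine]
            refine Or.inr (Or.inr (Or.inl ?_))
            exact (mbtw_iff hn).2 ⟨ne_of_lab (by rw [lab_pb]; omega),
              ne_of_lab (by rw [lab_pb]; omega), hxy,
              by unfold Pat; rw [lab_pb]; omega⟩
        · have hx1 : lab n x ≤ 1 := by omega
          by_cases hy2 : lab n y = 2
          · have hyb : y = pb n hn := eq_of_lab hn (by rw [lab_pb]; exact hy2) (by rw [lab_pb]; omega)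
            refine ⟨hyb ▸ hyT, ?_⟩
            apply hline
            rw [mem_mLine]
            refine Or.inr (Or.inr (Or.inr (Or.inr ?_)))
            exact (mbtw_iff hn).2 ⟨hxy, ne_of_lab (by rw [lab_pp]; omega),
              ne_of_lab (by rw [lab_pp]; omega),
              by unfold Pat; rw [lab_pp]; omega⟩
          · have hy4 : lab n y = 4 := by omega
            have hyp : y = pp n hn := eq_of_lab hn (by rw [lab_pp]; exact hy4) (by rw [lab_pp]; omega)
            refine ⟨?_, hyp ▸ hyT⟩
            apply hline
            rw [mem_mLine]
            refine Or.inr (Or.inr (Or.inl ?_))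
            exact (mbtw_iff hn).2 ⟨ne_of_lab (by rw [lab_pb]; omega),
              ne_of_lab (by rw [lab_pb]; omega), hxy,
              by unfold Pat; rw [lab_pb]; omega⟩
    obtain ⟨hbT, hpT⟩ := hbp
    have hbpne : pb n hn ≠ pp n hn := ne_of_lab (by rw [lab_pb, lab_pp]; omega)
    have hHS : ∀ h : Fin n, lab n h ≤ 1 → h ∈ T := by
      intro h hh1
      apply hcl _ _ hbT hpT hbpne
      rw [mem_mLine]
      refine Or.inr (Or.inr (Or.inr (Or.inl ?_)))
      exact (mbtw_iff hn).2 ⟨ne_of_lab (by rw [lab_pb]; omega), hbpne,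
        ne_of_lab (by rw [lab_pp]; omega),
        by unfold Pat; rw [lab_pb, lab_pp]; omega⟩
    simp only [BP, Set.mem_setOf_eq] at hz
    rcases hz with hz1 | hz2 | hz4
    · exact hHS z hz1
    · have : z = pb n hn := eq_of_lab hn (by rw [lab_pb]; exact hz2) (by rw [lab_pb]; omega)
      rwa [this]
    · have : z = pp n hn := eq_of_lab hn (by rw [lab_pp]; exact hz4) (by rw [lab_pp]; omega)
      rwa [this]

lemma clCQ {n : ℕ} (hn : 5 < n) {x y : Fin n} (hx : x ∈ CQ n) (hy : y ∈ CQ n)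
    (hxy : x ≠ y) (hh : ¬(lab n x ≤ 1 ∧ lab n y ≤ 1)) :
    @mClosureLine _ (M n) x y = CQ n := by
  apply Set.Subset.antisymm
  · exact Set.sInter_subset_of_mem
      ⟨cq_closed hn x y hx hy, fun u v hu hv _ => cq_closed hn u v hu hv⟩
  · intro z hz
    simp only [mClosureLine, Set.mem_sInter]
    rintro T ⟨hline, hcl⟩
    have hxT : x ∈ T := hline (mem_mLine.2 (Or.inl rfl))
    have hyT : y ∈ T := hline (mem_mLine.2 (Or.inr (Or.inl rfl)))
    simp only [CQ, Set.mem_setOf_eq] at hx hy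
    have hcq : pc n hn ∈ T ∧ pq n hn ∈ T := by
      by_cases hx3 : lab n x = 3
      · have hxc : x = pc n hn := eq_of_lab hn (by rw [lab_pc]; exact hx3) (by rw [lab_pc]; omega)
        refine ⟨hxc ▸ hxT, ?_⟩
        by_cases hy5 : lab n y = 5
        · have hyq : y = pq n hn := eq_of_lab hn (by rw [lab_pq]; exact hy5) (by rw [lab_pq]; omega)
          exact hyq ▸ hyT
        · have hy2' : lab n y ≠ 3 := fun h => hxy (lab_inj hn (by omega) (by omega))
          have hy1 : lab n y ≤ 1 := by omega
          apply hline
          rw [mem_mLine]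
          refine Or.inr (Or.inr (Or.inr (Or.inl ?_)))
          exact (mbtw_iff hn).2 ⟨ne_of_lab (by rw [lab_pq]; omega),
            hxy, ne_of_lab (by rw [lab_pq]; omega),
            by unfold Pat; rw [lab_pq]; omega⟩
      · by_cases hx5 : lab n x = 5
        · have hxq : x = pq n hn := eq_of_lab hn (by rw [lab_pq]; exact hx5) (by rw [lab_pq]; omega)
          refine ⟨?_, hxq ▸ hxT⟩
          by_cases hy3 : lab n y = 3
          · have hyc : y = pc n hn := eq_of_lab hn (by rw [lab_pc]; exact hy3) (by rw [lab_pc]; omega)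
            exact hyc ▸ hyT
          · have hy4' : lab n y ≠ 5 := fun h => hxy (lab_inj hn (by omega) (by omega))
            have hy1 : lab n y ≤ 1 := by omega
            apply hline
            rw [mem_mLine]
            refine Or.inr (Or.inr (Or.inl ?_))
            exact (mbtw_iff hn).2 ⟨ne_of_lab (by rw [lab_pc]; omega),
              ne_of_lab (by rw [lab_pc]; omega), hxy,
              by unfold Pat; rw [lab_pc]; omega⟩
        · have hx1 : lab n x ≤ 1 := by omega
          by_cases hy3 : lab n y = 3
          · have hyc : y = pc n hn := eq_of_lab hn (by rw [lab_pc]; exact hy3) (by rw [lab_pc]; omega)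
            refine ⟨hyc ▸ hyT, ?_⟩
            apply hline
            rw [mem_mLine]
            refine Or.inr (Or.inr (Or.inr (Or.inr ?_)))
            exact (mbtw_iff hn).2 ⟨hxy, ne_of_lab (by rw [lab_pq]; omega),
              ne_of_lab (by rw [lab_pq]; omega),
              by unfold Pat; rw [lab_pq]; omega⟩
          · have hy5 : lab n y = 5 := by omega
            have hyq : y = pq n hn := eq_of_lab hn (by rw [lab_pq]; exact hy5) (by rw [lab_pq]; omega)
            refine ⟨?_, hyq ▸ hyT⟩
            apply hline
            rw [mem_mLine]
            refine Or.inr (Or.inr (Or.inl ?_))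
            exact (mbtw_iff hn).2 ⟨ne_of_lab (by rw [lab_pc]; omega),
              ne_of_lab (by rw [lab_pc]; omega), hxy,
              by unfold Pat; rw [lab_pc]; omega⟩
    obtain ⟨hcT, hqT⟩ := hcq
    have hcqne : pc n hn ≠ pq n hn := ne_of_lab (by rw [lab_pc, lab_pq]; omega)
    have hHS : ∀ h : Fin n, lab n h ≤ 1 → h ∈ T := by
      intro h hh1
      apply hcl _ _ hcT hqT hcqne
      rw [mem_mLine]
      refine Or.inr (Or.inr (Or.inr (Or.inl ?_)))
      exact (mbtw_iff hn).2 ⟨ne_of_lab (by rw [lab_pc]; omega), hcqne,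
        ne_of_lab (by rw [lab_pq]; omega),
        by unfold Pat; rw [lab_pc, lab_pq]; omega⟩
    simp only [CQ, Set.mem_setOf_eq] at hz
    rcases hz with hz1 | hz3 | hz5
    · exact hHS z hz1
    · have : z = pc n hn := eq_of_lab hn (by rw [lab_pc]; exact hz3) (by rw [lab_pc]; omega)
      rwa [this]
    · have : z = pq n hn := eq_of_lab hn (by rw [lab_pq]; exact hz5) (by rw [lab_pq]; omega)
      rwa [this]

lemma clPair {n : ℕ} (hn : 5 < n) {x y : Fin n} (hu : 2 ≤ lab n x) (hv : 2 ≤ lab n y)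
    (h24 : ¬(lab n x = 2 ∧ lab n y = 4)) (h42 : ¬(lab n x = 4 ∧ lab n y = 2))
    (h35 : ¬(lab n x = 3 ∧ lab n y = 5)) (h53 : ¬(lab n x = 5 ∧ lab n y = 3)) :
    @mClosureLine _ (M n) x y = ({x, y} : Set (Fin n)) := by
  apply Set.Subset.antisymm
  · apply Set.sInter_subset_of_mem
    refine ⟨small_line hn hu hv h24 h42 h35 h53, ?_⟩
    intro u v huv hvv hne
    simp only [Set.mem_insert_iff, Set.mem_singleton_iff] at huv hvv
    rcases huv with rfl | rfl <;> rcases hvv with rfl | rfl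
    · exact absurd rfl hne
    · exact small_line hn hu hv h24 h42 h35 h53
    · have h := small_line hn hv hu (fun h => h42 ⟨h.2, h.1⟩) (fun h => h24 ⟨h.2, h.1⟩)
        (fun h => h53 ⟨h.2, h.1⟩) (fun h => h35 ⟨h.2, h.1⟩)
      rwa [Set.pair_comm] at h
    · exact absurd rfl hne
  · intro z hz
    simp only [mClosureLine, Set.mem_sInter]
    rintro T ⟨hline, hcl⟩
    simp only [Set.mem_insert_iff, Set.mem_singleton_iff] at hz
    rcases hz with rfl | rfl
    · exact hline (mem_mLine.2 (Or.inl rfl))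
    · exact hline (mem_mLine.2 (Or.inr (Or.inl rfl)))

lemma classify {n : ℕ} (hn : 5 < n) (x y : Fin n) (hxy : x ≠ y) :
    @mClosureLine _ (M n) x y = HS n ∨
    @mClosureLine _ (M n) x y = BP n ∨
    @mClosureLine _ (M n) x y = CQ n ∨
    @mClosureLine _ (M n) x y = ({pb n hn, pc n hn} : Set (Fin n)) ∨
    @mClosureLine _ (M n) x y = ({pb n hn, pq n hn} : Set (Fin n)) ∨
    @mClosureLine _ (M n) x y = ({pc n hn, pp n hn} : Set (Fin n)) ∨
    @mClosureLine _ (M n) x y = ({pp n hn, pq n hn} : Set (Fin n)) := by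
  have hx5 := lab_le n x
  have hy5 := lab_le n y
  have hlne : ∀ {u v : Fin n}, lab n u ≠ lab n v → u ≠ v := fun h => ne_of_lab h
  by_cases hA : lab n x ≤ 1 ∧ lab n y ≤ 1
  · exact Or.inl (clA hn hA.1 hA.2 hxy)
  · by_cases hB : (lab n x ≤ 1 ∨ lab n x = 2 ∨ lab n x = 4) ∧
        (lab n y ≤ 1 ∨ lab n y = 2 ∨ lab n y = 4)
    · exact Or.inr (Or.inl (clBP hn hB.1 hB.2 hxy hA))
    · by_cases hC : (lab n x ≤ 1 ∨ lab n x = 3 ∨ lab n x = 5) ∧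
          (lab n y ≤ 1 ∨ lab n y = 3 ∨ lab n y = 5)
      · exact Or.inr (Or.inr (Or.inl (clCQ hn hC.1 hC.2 hxy hA)))
      · -- mixed pair among labels {2,3,4,5}, not {2,4} and not {3,5}
        have hu : 2 ≤ lab n x ∧ 2 ≤ lab n y := by omega
        have hx2 : lab n x = 2 ∨ lab n x = 3 ∨ lab n x = 4 ∨ lab n x = 5 := by omega
        have hy2 : lab n y = 2 ∨ lab n y = 3 ∨ lab n y = 4 ∨ lab n y = 5 := by omega
        have hmix : ¬(lab n x = 2 ∧ lab n y = 4) ∧ ¬(lab n x = 4 ∧ lab n y = 2) ∧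
            ¬(lab n x = 3 ∧ lab n y = 5) ∧ ¬(lab n x = 5 ∧ lab n y = 3) := by omega
        have hcl := clPair hn hu.1 hu.2 hmix.1 hmix.2.1 hmix.2.2.1 hmix.2.2.2
        have eb : ∀ u : Fin n, lab n u = 2 → u = pb n hn := fun u h =>
          eq_of_lab hn (by rw [lab_pb]; omega) (by rw [lab_pb]; omega)
        have ec : ∀ u : Fin n, lab n u = 3 → u = pc n hn := fun u h =>
          eq_of_lab hn (by rw [lab_pc]; omega) (by rw [lab_pc]; omega)
        have ep : ∀ u : Fin n, lab n u = 4 → u = pp n hn := fun u h =>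
          eq_of_lab hn (by rw [lab_pp]; omega) (by rw [lab_pp]; omega)
        have eq' : ∀ u : Fin n, lab n u = 5 → u = pq n hn := fun u h =>
          eq_of_lab hn (by rw [lab_pq]; omega) (by rw [lab_pq]; omega)
        rcases hx2 with h | h | h | h <;> rcases hy2 with h' | h' | h' | h'
        · exact absurd (lab_inj hn (h.trans h'.symm) (by omega)) hxy
        · obtain rfl := eb x h; obtain rfl := ec y h'
          exact Or.inr (Or.inr (Or.inr (Or.inl hcl)))
        · exact absurd ⟨h, h'⟩ hmix.1
        · obtain rfl := eb x h; obtain rfl := eq' y h'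
          exact Or.inr (Or.inr (Or.inr (Or.inr (Or.inl hcl))))
        · obtain rfl := ec x h; obtain rfl := eb y h'
          exact Or.inr (Or.inr (Or.inr (Or.inl (hcl.trans (Set.pair_comm _ _)))))
        · exact absurd (lab_inj hn (h.trans h'.symm) (by omega)) hxy
        · obtain rfl := ec x h; obtain rfl := ep y h'
          exact Or.inr (Or.inr (Or.inr (Or.inr (Or.inr (Or.inl hcl)))))
        · exact absurd ⟨h, h'⟩ hmix.2.2.1
        · exact absurd ⟨h, h'⟩ hmix.2.1
        · obtain rfl := ep x h; obtain rfl := ec y h'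
          exact Or.inr (Or.inr (Or.inr (Or.inr (Or.inr (Or.inl (hcl.trans (Set.pair_comm _ _)))))))
        · exact absurd (lab_inj hn (h.trans h'.symm) (by omega)) hxy
        · obtain rfl := ep x h; obtain rfl := eq' y h'
          exact Or.inr (Or.inr (Or.inr (Or.inr (Or.inr (Or.inr hcl)))))
        · obtain rfl := eq' x h; obtain rfl := eb y h'
          exact Or.inr (Or.inr (Or.inr (Or.inr (Or.inl (hcl.trans (Set.pair_comm _ _))))))
        · exact absurd ⟨h, h'⟩ hmix.2.2.2
        · obtain rfl := eq' x h; obtain rfl := ep y h'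
          exact Or.inr (Or.inr (Or.inr (Or.inr (Or.inr (Or.inr (hcl.trans (Set.pair_comm _ _)))))))
        · exact absurd (lab_inj hn (h.trans h'.symm) (by omega)) hxy

lemma ne_of_mem_notMem {α : Type*} {A B : Set α} {x : α} (h1 : x ∈ A) (h2 : x ∉ B) :
    A ≠ B := fun h => h2 (h ▸ h1)

lemma card_le {n : ℕ} {S : Set (Fin n)} {u v : Fin n} (huv : u ≠ v)
    (h : S ⊆ Set.univ \ {u, v}) : S.ncard ≤ n - 2 := by
  have h1 : (Set.univ \ {u, v} : Set (Fin n)).ncard = n - 2 := by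
    rw [Set.ncard_diff (Set.subset_univ _), Set.ncard_univ, Nat.card_eq_fintype_card,
      Fintype.card_fin, Set.ncard_pair huv]
  calc S.ncard ≤ (Set.univ \ {u, v} : Set (Fin n)).ncard := Set.ncard_le_ncard h (Set.toFinite _)
    _ = n - 2 := h1

theorem stmt_2 (n : ℕ) (hn : 5 < n) :
    ∃ m : MetricSpace (Fin n),
      {C : Set (Fin n) | ∃ x y : Fin n, x ≠ y ∧ C = @mClosureLine (Fin n) m x y}.ncard = 7 ∧
      ∀ x y : Fin n, x ≠ y → (@mClosureLine (Fin n) m x y).ncard ≤ n - 2 := by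
  refine ⟨M n, ?_, ?_⟩
  · -- exactly 7 closure lines
    -- point distinctness
    have hab : pa n hn ≠ pb n hn := ne_of_lab (by rw [lab_pa, lab_pb]; omega)
    have hac : pa n hn ≠ pc n hn := ne_of_lab (by rw [lab_pa, lab_pc]; omega)
    have hap : pa n hn ≠ pp n hn := ne_of_lab (by rw [lab_pa, lab_pp]; omega)
    have haq : pa n hn ≠ pq n hn := ne_of_lab (by rw [lab_pa, lab_pq]; omega)
    have hbc : pb n hn ≠ pc n hn := ne_of_lab (by rw [lab_pb, lab_pc]; omega)
    have hbp : pb n hn ≠ pp n hn := ne_of_lab (by rw [lab_pb, lab_pp]; omega)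
    have hbq : pb n hn ≠ pq n hn := ne_of_lab (by rw [lab_pb, lab_pq]; omega)
    have hcp : pc n hn ≠ pp n hn := ne_of_lab (by rw [lab_pc, lab_pp]; omega)
    have hcq : pc n hn ≠ pq n hn := ne_of_lab (by rw [lab_pc, lab_pq]; omega)
    have hpq : pp n hn ≠ pq n hn := ne_of_lab (by rw [lab_pp, lab_pq]; omega)
    have hxa : px n hn ≠ pa n hn := ne_of_lab (by rw [lab_px, lab_pa]; omega)
    -- memberships
    have haHS : pa n hn ∈ HS n := by simp [HS, lab_pa]
    have haBP : pa n hn ∈ BP n := by simp [BP, lab_pa]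
    have haCQ : pa n hn ∈ CQ n := by simp [CQ, lab_pa]
    have hbHS : pb n hn ∉ HS n := by simp [HS, lab_pb]
    have hbBP : pb n hn ∈ BP n := by simp [BP, lab_pb]
    have hbCQ : pb n hn ∉ CQ n := by simp [CQ, lab_pb]
    have hcHS : pc n hn ∉ HS n := by simp [HS, lab_pc]
    have hcCQ : pc n hn ∈ CQ n := by simp [CQ, lab_pc]
    have hpBP : pp n hn ∈ BP n := by simp [BP, lab_pp]
    have hqCQ : pq n hn ∈ CQ n := by simp [CQ, lab_pq]
    have hmain : {C : Set (Fin n) | ∃ x y : Fin n, x ≠ y ∧ C = @mClosureLine (Fin n) (M n) x y}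
        = {HS n, BP n, CQ n, {pb n hn, pc n hn}, {pb n hn, pq n hn},
           {pc n hn, pp n hn}, {pp n hn, pq n hn}} := by
      ext C
      constructor
      · rintro ⟨x, y, hxy, rfl⟩
        rcases classify hn x y hxy with h | h | h | h | h | h | h <;> rw [h] <;> simp
      · intro hC
        simp only [Set.mem_insert_iff, Set.mem_singleton_iff] at hC
        rcases hC with rfl | rfl | rfl | rfl | rfl | rfl | rfl
        · exact ⟨px n hn, pa n hn, hxa,
            (clA hn (by rw [lab_px]; omega) (by rw [lab_pa]) hxa).symm⟩
        · exact ⟨pb n hn, pp n hn, hbp,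
            (clBP hn hbBP hpBP hbp (by rw [lab_pb, lab_pp] at *; omega)).symm⟩
        · exact ⟨pc n hn, pq n hn, hcq,
            (clCQ hn hcCQ hqCQ hcq (by rw [lab_pc, lab_pq] at *; omega)).symm⟩
        · exact ⟨pb n hn, pc n hn, hbc,
            (clPair hn (by rw [lab_pb]) (by rw [lab_pc]; omega) (by rw [lab_pb, lab_pc]; omega)
              (by rw [lab_pb, lab_pc]; omega) (by rw [lab_pb, lab_pc]; omega)
              (by rw [lab_pb, lab_pc]; omega)).symm⟩
        · exact ⟨pb n hn, pq n hn, hbq,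
            (clPair hn (by rw [lab_pb]) (by rw [lab_pq]; omega) (by rw [lab_pb, lab_pq]; omega)
              (by rw [lab_pb, lab_pq]; omega) (by rw [lab_pb, lab_pq]; omega)
              (by rw [lab_pb, lab_pq]; omega)).symm⟩
        · exact ⟨pc n hn, pp n hn, hcp,
            (clPair hn (by rw [lab_pc]; omega) (by rw [lab_pp]; omega) (by rw [lab_pc, lab_pp]; omega)
              (by rw [lab_pc, lab_pp]; omega) (by rw [lab_pc, lab_pp]; omega)
              (by rw [lab_pc, lab_pp]; omega)).symm⟩
        · exact ⟨pp n hn, pq n hn, hpq,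
            (clPair hn (by rw [lab_pp]; omega) (by rw [lab_pq]; omega) (by rw [lab_pp, lab_pq]; omega)
              (by rw [lab_pp, lab_pq]; omega) (by rw [lab_pp, lab_pq]; omega)
              (by rw [lab_pp, lab_pq]; omega)).symm⟩
    rw [hmain]
    -- set distinctness
    have haP1 : pa n hn ∉ ({pb n hn, pc n hn} : Set (Fin n)) := by simp [hab, hac]
    have haP2 : pa n hn ∉ ({pb n hn, pq n hn} : Set (Fin n)) := by simp [hab, haq]
    have haP3 : pa n hn ∉ ({pc n hn, pp n hn} : Set (Fin n)) := by simp [hac, hap]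
    have haP4 : pa n hn ∉ ({pp n hn, pq n hn} : Set (Fin n)) := by simp [hap, haq]
    have hbP3 : pb n hn ∉ ({pc n hn, pp n hn} : Set (Fin n)) := by simp [hbc, hbp]
    have hbP4 : pb n hn ∉ ({pp n hn, pq n hn} : Set (Fin n)) := by simp [hbp, hbq]
    have hcP2 : pc n hn ∉ ({pb n hn, pq n hn} : Set (Fin n)) := by
      simp [hbc.symm, hcq]
    have hcP4 : pc n hn ∉ ({pp n hn, pq n hn} : Set (Fin n)) := by simp [hcp, hcq]
    rw [Set.ncard_insert_of_notMem ?h1, Set.ncard_insert_of_notMem ?h2,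
      Set.ncard_insert_of_notMem ?h3, Set.ncard_insert_of_notMem ?h4,
      Set.ncard_insert_of_notMem ?h5, Set.ncard_insert_of_notMem ?h6, Set.ncard_singleton]
    case h1 =>
      simp only [Set.mem_insert_iff, Set.mem_singleton_iff]
      push_neg
      exact ⟨ne_of_mem_notMem hbBP hbHS |>.symm, ne_of_mem_notMem hcCQ hcHS |>.symm,
        ne_of_mem_notMem haHS haP1, ne_of_mem_notMem haHS haP2,
        ne_of_mem_notMem haHS haP3, ne_of_mem_notMem haHS haP4⟩
    case h2 =>
      simp only [Set.mem_insert_iff, Set.mem_singleton_iff]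
      push_neg
      exact ⟨ne_of_mem_notMem hbBP hbCQ, ne_of_mem_notMem haBP haP1,
        ne_of_mem_notMem haBP haP2, ne_of_mem_notMem haBP haP3, ne_of_mem_notMem haBP haP4⟩
    case h3 =>
      simp only [Set.mem_insert_iff, Set.mem_singleton_iff]
      push_neg
      exact ⟨ne_of_mem_notMem haCQ haP1, ne_of_mem_notMem haCQ haP2,
        ne_of_mem_notMem haCQ haP3, ne_of_mem_notMem haCQ haP4⟩
    case h4 =>
      simp only [Set.mem_insert_iff, Set.mem_singleton_iff]
      push_neg
      refine ⟨ne_of_mem_notMem (by simp : pc n hn ∈ ({pb n hn, pc n hn} : Set (Fin n))) hcP2,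
        ne_of_mem_notMem (by simp : pb n hn ∈ ({pb n hn, pc n hn} : Set (Fin n))) hbP3,
        ne_of_mem_notMem (by simp : pb n hn ∈ ({pb n hn, pc n hn} : Set (Fin n))) hbP4⟩
    case h5 =>
      simp only [Set.mem_insert_iff, Set.mem_singleton_iff]
      push_neg
      refine ⟨ne_of_mem_notMem (by simp : pb n hn ∈ ({pb n hn, pq n hn} : Set (Fin n))) hbP3,
        ne_of_mem_notMem (by simp : pb n hn ∈ ({pb n hn, pq n hn} : Set (Fin n))) hbP4⟩
    case h6 =>
      simp only [Set.mem_singleton_iff]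
      exact ne_of_mem_notMem (by simp : pc n hn ∈ ({pc n hn, pp n hn} : Set (Fin n))) hcP4
  · -- every closure line has at most n - 2 points
    intro x y hxy
    have hbc : pb n hn ≠ pc n hn := ne_of_lab (by rw [lab_pb, lab_pc]; omega)
    have hbq : pb n hn ≠ pq n hn := ne_of_lab (by rw [lab_pb, lab_pq]; omega)
    have hcp : pc n hn ≠ pp n hn := ne_of_lab (by rw [lab_pc, lab_pp]; omega)
    have hcq : pc n hn ≠ pq n hn := ne_of_lab (by rw [lab_pc, lab_pq]; omega)
    have hbp : pb n hn ≠ pp n hn := ne_of_lab (by rw [lab_pb, lab_pp]; omega)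
    have hpq : pp n hn ≠ pq n hn := ne_of_lab (by rw [lab_pp, lab_pq]; omega)
    rcases classify hn x y hxy with h | h | h | h | h | h | h <;> rw [h]
    · refine card_le hpq ?_
      intro z hz
      simp only [HS, Set.mem_setOf_eq] at hz
      simp only [Set.mem_diff, Set.mem_univ, Set.mem_insert_iff, Set.mem_singleton_iff, true_and]
      push_neg
      exact ⟨ne_of_lab (by rw [lab_pp]; omega), ne_of_lab (by rw [lab_pq]; omega)⟩
    · refine card_le hcq ?_
      intro z hz
      simp only [BP, Set.mem_setOf_eq] at hz
      simp only [Set.mem_diff, Set.mem_univ, Set.mem_insert_iff, Set.mem_singleton_iff, true_and]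
      push_neg
      exact ⟨ne_of_lab (by rw [lab_pc]; omega), ne_of_lab (by rw [lab_pq]; omega)⟩
    · refine card_le hbp ?_
      intro z hz
      simp only [CQ, Set.mem_setOf_eq] at hz
      simp only [Set.mem_diff, Set.mem_univ, Set.mem_insert_iff, Set.mem_singleton_iff, true_and]
      push_neg
      exact ⟨ne_of_lab (by rw [lab_pb]; omega), ne_of_lab (by rw [lab_pp]; omega)⟩
    · rw [Set.ncard_pair hbc]; omega
    · rw [Set.ncard_pair hbq]; omega
    · rw [Set.ncard_pair hcp]; omega
    · rw [Set.ncard_pair hpq]; omega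
end

section
/- In a finite connected bipartite simple graph with at least two vertices, the line L(uv) determined by any two adjacent vertices u and v is universal; consequently, every finite connected bipartite graph with at least two vertices has the DBE property. -/
/-- The set of all (distinct) lines of the graph `G`. -/
def gLines {V : Type*} (G : SimpleGraph V) : Set (Set V) :=
  {L | ∃ x y : V, x ≠ y ∧ L = gLine G x y}

/-- `G` has a universal line: a line consisting of all vertices. -/
def gHasUniversalLine {V : Type*} (G : SimpleGraph V) : Prop :=
  ∃ x y : V, x ≠ y ∧ gLine G x y = Set.univ

/-- The De Bruijn–Erdős property: at least `|G|` distinct lines or a universal line. -/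
def DBEProperty {V : Type*} [Fintype V] (G : SimpleGraph V) : Prop :=
  Fintype.card V ≤ (gLines G).ncard ∨ gHasUniversalLine G

private lemma fin2_helper : ∀ x y z : Fin 2, x ≠ y → (x = z ↔ ¬ y = z) := by decide

private lemma walk_parity {V : Type*} {G : SimpleGraph V} (c : G.Coloring (Fin 2))
    {a b : V} (p : G.Walk a b) : c a = c b ↔ Even p.length := by
  induction p with
  | nil => simp
  | @cons a x b h q ih =>
    have hax : c a ≠ c x := c.valid h
    simp only [SimpleGraph.Walk.length_cons, Nat.even_add_one, ← ih]
    exact fin2_helper _ _ _ hax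

theorem stmt_5 (V : Type*) [Fintype V] (G : SimpleGraph V) (hconn : G.Connected)
    (h2 : 2 ≤ Fintype.card V) (hbip : G.Colorable 2) :
    (∀ u v : V, G.Adj u v → gLine G u v = Set.univ) ∧ DBEProperty G := by
  obtain ⟨c⟩ := hbip
  have key : ∀ u v : V, G.Adj u v → gLine G u v = Set.univ := by
    intro u v huv
    ext z
    simp only [Set.mem_univ, iff_true, gLine, Set.mem_union, Set.mem_insert_iff,
      Set.mem_singleton_iff, Set.mem_setOf_eq]
    by_cases hzu : z = u
    · exact Or.inl (Or.inl hzu)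
    by_cases hzv : z = v
    · exact Or.inl (Or.inr hzv)
    right
    have hd1 : G.dist u v = 1 := SimpleGraph.dist_eq_one_iff_adj.mpr huv
    obtain ⟨p, hp⟩ := hconn.exists_walk_length_eq_dist u z
    obtain ⟨q, hq⟩ := hconn.exists_walk_length_eq_dist v z
    have pu : c u = c z ↔ Even (G.dist u z) := by rw [← hp]; exact walk_parity c p
    have pv : c v = c z ↔ Even (G.dist v z) := by rw [← hq]; exact walk_parity c q
    have huvne : c u ≠ c v := c.valid huv
    have hpar : Even (G.dist u z) ↔ ¬ Even (G.dist v z) := by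
      rw [← pu, ← pv]; exact fin2_helper _ _ _ huvne
    have ht1 : G.dist u z ≤ G.dist u v + G.dist v z := hconn.dist_triangle
    have ht2 : G.dist v z ≤ G.dist v u + G.dist u z := hconn.dist_triangle
    rw [show G.dist v u = G.dist u v from SimpleGraph.dist_comm] at ht2
    rw [Nat.even_iff, Nat.even_iff] at hpar
    have : G.dist u z = G.dist v z + 1 ∨ G.dist v z = G.dist u z + 1 := by omega
    rcases this with h | h
    · -- v between u and z : gBtw G u v z
      right; right
      exact ⟨huv.ne, fun hvz => hzv hvz.symm, fun huz => hzu huz.symm,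
        by rw [hd1]; omega⟩
    · -- u between z and v : gBtw G z u v
      right; left
      exact ⟨hzu, huv.ne, hzv, by rw [show G.dist z u = G.dist u z from SimpleGraph.dist_comm, show G.dist z v = G.dist v z from SimpleGraph.dist_comm, hd1]; omega⟩
  refine ⟨key, Or.inr ?_⟩
  have : Nontrivial V := Fintype.one_lt_card_iff_nontrivial.mp h2
  obtain ⟨u, w, huw⟩ := exists_pair_ne V
  obtain ⟨p⟩ := hconn u w
  cases p with
  | nil => exact absurd rfl huw
  | cons h q => exact ⟨u, _, h.ne, key _ _ h⟩
end

section
/- For a finite connected simple graph G with at least two vertices, every two distinct lines of G share at most one vertex if and only if G is a complete graph, or a path, or the cycle C4 on four vertices. -/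
/-!
If `G` is not complete, pick `x ~ y ~ z` with `dist x z = 2`. The lines `xy`, `yz` and `xz` pairwise
share two points, so they coincide, and induction on the distance to `y` shows that this line is
everything: a vertex `w` off it is equidistant from `x`, `y`, `z`, and a neighbour `w'` of `w`
closer to `y` puts `y` on the line `w'w`, which then meets the line `xz` in `y` and `w'`. A line
containing all vertices meets every other line in two points, so every line is the whole vertex
set: every triple of vertices is collinear.

In such a graph every vertex lies between the ends `x`, `y` of a diametral pair, and two vertices at
the same distance `k` from `x` are at distance `2k = diam` from each other. If no two vertices share
a level, the levels are consecutive and `G` is a path; otherwise two such vertices and their common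
predecessor force `diam = 2`, and `G` is the 4-cycle.

Conversely, the lines of a complete graph are its edges, and in a path or in `C₄` all triples are
collinear, so there is just one line.
-/

namespace SimpleGraph

variable {V W : Type*} {G : SimpleGraph V} {x y z u v w : V}

def DistCollinear (G : SimpleGraph V) (x y z : V) : Prop :=
  G.dist x z + G.dist z y = G.dist x y ∨ G.dist z x + G.dist x y = G.dist z y ∨
    G.dist x y + G.dist y z = G.dist x z

def AllCollinear (G : SimpleGraph V) : Prop := ∀ x y z, G.DistCollinear x y z

def LinesMeetAtMostOnce (G : SimpleGraph V) : Prop :=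
  ∀ L₁ ∈ gLines G, ∀ L₂ ∈ gLines G, L₁ ≠ L₂ → (L₁ ∩ L₂).ncard ≤ 1

lemma distCollinear_of_eq_left (h : z = x) : G.DistCollinear x y z := by
  subst h; right; left; simp

lemma distCollinear_of_eq_right (h : z = y) : G.DistCollinear x y z := by
  subst h; left; simp

lemma mem_gLine_iff (hxy : x ≠ y) : z ∈ gLine G x y ↔ G.DistCollinear x y z := by
  by_cases hzx : z = x
  · simp [hzx, gLine, distCollinear_of_eq_left]
  by_cases hzy : z = y
  · simp [hzy, gLine, distCollinear_of_eq_right]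
  simp [gLine, gBtw, DistCollinear, hxy, hzx, hzy, Ne.symm hzx, Ne.symm hzy]

lemma left_mem_gLine : x ∈ gLine G x y := Or.inl (Or.inl rfl)

lemma right_mem_gLine : y ∈ gLine G x y := Or.inl (Or.inr rfl)

lemma gLine_mem_gLines (hxy : x ≠ y) : gLine G x y ∈ gLines G := ⟨x, y, hxy, rfl⟩

lemma LinesMeetAtMostOnce.gLine_eq [Finite V] {s t a b : V} (hP : G.LinesMeetAtMostOnce)
    (huv : u ≠ v) (hst : s ≠ t) (hab : a ≠ b)
    (ha : a ∈ gLine G u v) (hb : b ∈ gLine G u v)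
    (ha' : a ∈ gLine G s t) (hb' : b ∈ gLine G s t) : gLine G u v = gLine G s t := by
  by_contra hne
  have hpair : ({a, b} : Set V) ⊆ gLine G u v ∩ gLine G s t := by
    rintro c (rfl | rfl)
    exacts [⟨ha, ha'⟩, ⟨hb, hb'⟩]
  have := Set.ncard_le_ncard hpair (Set.toFinite _)
  have := hP _ (gLine_mem_gLines huv) _ (gLine_mem_gLines hst) hne
  rw [Set.ncard_pair hab] at *
  omega

lemma gLine_top (hxy : x ≠ y) : gLine (⊤ : SimpleGraph V) x y = {x, y} := by
  refine Set.union_eq_self_of_subset_right ?_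
  rintro z (⟨h₁, h₂, h₃, h⟩ | ⟨h₁, h₂, h₃, h⟩ | ⟨h₁, h₂, h₃, h⟩) <;>
    simp [dist_top_of_ne, *] at h

lemma linesMeetAtMostOnce_top : (⊤ : SimpleGraph V).LinesMeetAtMostOnce := by
  rintro _ ⟨x, y, hxy, rfl⟩ _ ⟨u, v, huv, rfl⟩ hne
  rw [gLine_top hxy, gLine_top huv] at hne ⊢
  by_contra! hcon
  have hpair : ∀ s t : V, ({s, t} : Set V).ncard ≤ 2 := fun s t =>
    (Set.ncard_insert_le s {t}).trans (by rw [Set.ncard_singleton])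
  have h₁ := Set.eq_of_subset_of_ncard_le Set.inter_subset_left ((hpair x y).trans hcon)
  have h₂ := Set.eq_of_subset_of_ncard_le Set.inter_subset_right ((hpair u v).trans hcon)
  exact hne (h₁.symm.trans h₂)

lemma AllCollinear.gLine_eq_univ (h : G.AllCollinear) (hxy : x ≠ y) : gLine G x y = Set.univ :=
  Set.eq_univ_of_forall fun z => (mem_gLine_iff hxy).mpr (h x y z)

lemma AllCollinear.linesMeetAtMostOnce (h : G.AllCollinear) : G.LinesMeetAtMostOnce := by
  rintro _ ⟨x, y, hxy, rfl⟩ _ ⟨u, v, huv, rfl⟩ hne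
  exact absurd ((h.gLine_eq_univ hxy).trans (h.gLine_eq_univ huv).symm) hne

lemma Hom.edist_le {G' : SimpleGraph W} (f : G →g G') (u v : V) :
    G'.edist (f u) (f v) ≤ G.edist u v := by
  by_cases hr : G.Reachable u v
  · obtain ⟨p, hp⟩ := hr.exists_walk_length_eq_edist
    rw [← hp, ← Walk.length_map f]
    exact SimpleGraph.edist_le _
  · simp [edist_eq_top_of_not_reachable hr]

lemma Iso.edist_eq {G' : SimpleGraph W} (e : G ≃g G') (u v : V) :
    G'.edist (e u) (e v) = G.edist u v :=
  le_antisymm (e.toHom.edist_le u v) (by simpa using e.symm.toHom.edist_le (e u) (e v))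

lemma Iso.dist_eq {G' : SimpleGraph W} (e : G ≃g G') (u v : V) :
    G'.dist (e u) (e v) = G.dist u v := by
  simp only [dist, e.edist_eq]

lemma AllCollinear.of_iso {G' : SimpleGraph W} (e : G ≃g G') (h : G'.AllCollinear) :
    G.AllCollinear := by
  intro x y z
  simpa only [DistCollinear, e.dist_eq] using h (e x) (e y) (e z)

lemma pathGraph_dist_le {n : ℕ} (i : Fin n) (j : ℕ) (hj : j < n) (hij : (i : ℕ) ≤ j) :
    (pathGraph n).dist i ⟨j, hj⟩ ≤ j - i := by
  induction j with
  | zero => simp [Fin.ext_iff, show (i : ℕ) = 0 by omega]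
  | succ j ih =>
    rcases hij.eq_or_lt with h | h
    · simp [Fin.ext_iff, h]
    have hj' : j < n := by omega
    have hadj : (pathGraph n).Adj ⟨j, hj'⟩ ⟨j + 1, hj⟩ := by simp [pathGraph_adj]
    calc (pathGraph n).dist i ⟨j + 1, hj⟩
        ≤ (pathGraph n).dist i ⟨j, hj'⟩ + (pathGraph n).dist ⟨j, hj'⟩ ⟨j + 1, hj⟩ :=
          ((pathGraph_preconnected n) _ _).dist_triangle_right i
      _ ≤ j + 1 - i := by
          rw [dist_eq_one_iff_adj.mpr hadj]
          have := ih hj' (by omega)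
          omega

lemma Walk.natAbs_sub_le_length_pathGraph {n : ℕ} {i j : Fin n} (p : (pathGraph n).Walk i j) :
    ((j : ℤ) - i).natAbs ≤ p.length := by
  induction p with
  | nil => simp
  | cons hadj _ ih =>
    rw [pathGraph_adj] at hadj
    simp only [Walk.length_cons]
    omega

lemma pathGraph_dist {n : ℕ} (i j : Fin n) : (pathGraph n).dist i j = ((j : ℤ) - i).natAbs := by
  obtain ⟨p, hp⟩ := (pathGraph_preconnected n i j).exists_walk_length_eq_dist
  have := hp ▸ p.natAbs_sub_le_length_pathGraph
  rcases le_total (i : ℕ) j with h | h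
  · have := pathGraph_dist_le i j j.isLt h
    rw [Fin.eta] at this
    omega
  · have := pathGraph_dist_le j i i.isLt h
    rw [Fin.eta, dist_comm] at this
    omega

lemma allCollinear_pathGraph (n : ℕ) : (pathGraph n).AllCollinear := by
  intro x y z
  simp only [DistCollinear, pathGraph_dist]
  omega

lemma cycleGraph_four_dist (i j : Fin 4) :
    (cycleGraph 4).dist i j = if i = j then 0 else if (cycleGraph 4).Adj i j then 1 else 2 := by
  split_ifs with hij hadj
  · simp [hij]
  · exact dist_eq_one_iff_adj.mpr hadj
  · obtain rfl : j = i + 2 := by revert i j; decide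
    have h₁ : (cycleGraph 4).Adj i (i + 1) := by revert i; decide
    have h₂ : (cycleGraph 4).Adj (i + 1) (i + 2) := by revert i; decide
    have hle := dist_le (.cons h₁ (.cons h₂ .nil))
    have hconn : (cycleGraph 4).Connected := cycleGraph_connected
    have hlt := hconn.one_lt_dist_of_ne_of_not_adj hij hadj
    rw [Walk.length_cons, Walk.length_cons, Walk.length_nil] at hle
    omega

lemma allCollinear_cycleGraph_four : (cycleGraph 4).AllCollinear := by
  intro x y z
  simp only [DistCollinear, cycleGraph_four_dist]
  revert x y z
  decide

lemma exists_adj_dist_eq_of_dist_eq_succ {m : ℕ} (h : G.dist x v = m + 1) :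
    ∃ w, G.Adj w v ∧ G.dist x w = m := by
  obtain ⟨p, hp⟩ := exists_walk_of_dist_ne_zero (u := v) (v := x) (by rw [dist_comm, h]; omega)
  cases p with
  | nil => simp at h
  | cons hadj q =>
    refine ⟨_, hadj.symm, ?_⟩
    have hq := dist_le q
    rw [Walk.length_cons, dist_comm, h] at hp
    rw [dist_comm] at hq
    rcases hadj.diff_dist_adj (u := x) with h' | h' | h' <;> omega

lemma exists_adj_adj_dist_eq_two (hconn : G.Connected) (hne : G ≠ ⊤) :
    ∃ x y z, G.Adj x y ∧ G.Adj y z ∧ G.dist x z = 2 := by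
  obtain ⟨u, v, huv, hnadj⟩ : ∃ u v, u ≠ v ∧ ¬G.Adj u v := by
    by_contra! h
    exact hne (eq_top_iff.mpr fun u v huv => h u v huv)
  obtain ⟨p, hp⟩ := hconn.exists_walk_length_eq_dist u v
  obtain ⟨x, y, z, hxy, hyz, hxz, hne⟩ :=
    p.exists_adj_adj_not_adj_ne hp (hconn.one_lt_dist_of_ne_of_not_adj huv hnadj)
  refine ⟨x, y, z, hxy, hyz, le_antisymm ?_ (hconn.one_lt_dist_of_ne_of_not_adj hne hxz)⟩
  simpa using dist_le (.cons hxy (.cons hyz .nil))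

lemma dist_eq_of_adj_of_not_distCollinear (hxy : G.Adj x y) (h : ¬G.DistCollinear x y w) :
    G.dist x w = G.dist y w := by
  have hxy' : G.dist x y = 1 := dist_eq_one_iff_adj.mpr hxy
  have hx : G.dist w x = G.dist x w := dist_comm
  have hy : G.dist w y = G.dist y w := dist_comm
  rw [DistCollinear] at h
  rcases hxy.diff_dist_adj (u := w) with h' | h' | h' <;> omega

lemma distCollinear_comm : G.DistCollinear x y z ↔ G.DistCollinear y x z := by
  simp only [DistCollinear, dist_comm (u := x) (v := y), dist_comm (u := x) (v := z),
    dist_comm (u := y) (v := z)]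
  omega

lemma LinesMeetAtMostOnce.gLine_eq_univ [Finite V] (hP : G.LinesMeetAtMostOnce)
    (hconn : G.Connected) (hxy : G.Adj x y) (hyz : G.Adj y z) (hxz : G.dist x z = 2) :
    gLine G x z = Set.univ := by
  have hxz' : x ≠ z := by rintro rfl; simp at hxz
  have hyL : y ∈ gLine G x z := (mem_gLine_iff hxz').mpr <| Or.inl <| by
    rw [dist_eq_one_iff_adj.mpr hxy, dist_eq_one_iff_adj.mpr hyz, hxz]
  have hL₁ : gLine G x y = gLine G x z :=
    hP.gLine_eq hxy.ne hxz' hxy.ne left_mem_gLine right_mem_gLine left_mem_gLine hyL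
  have hL₂ : gLine G y z = gLine G x z :=
    hP.gLine_eq hyz.ne hxz' hyz.ne left_mem_gLine right_mem_gLine hyL right_mem_gLine
  refine Set.eq_univ_of_forall fun w => ?_
  induction hn : G.dist y w using Nat.strong_induction_on generalizing w with
  | _ n ih =>
  by_contra hw
  have hxw : G.dist x w = n := hn ▸ dist_eq_of_adj_of_not_distCollinear hxy fun h =>
    hw (hL₁ ▸ (mem_gLine_iff hxy.ne).mpr h)
  have hzw : G.dist z w = n := hn ▸ dist_eq_of_adj_of_not_distCollinear hyz.symm fun h =>
    hw (hL₂ ▸ (mem_gLine_iff hyz.ne).mpr (distCollinear_comm.mp h))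
  have hn0 : n ≠ 0 := by
    rintro rfl
    exact hw (hconn.dist_eq_zero_iff.mp hn ▸ hyL)
  have hn1 : n ≠ 1 := by
    rintro rfl
    exact hw <| (mem_gLine_iff hxz').mpr <| Or.inl <| by rw [hxz, dist_comm (u := w), hzw, hxw]
  obtain ⟨w', hw'w, hw'⟩ :=
    exists_adj_dist_eq_of_dist_eq_succ (show G.dist y w = (n - 1) + 1 by omega)
  have hw'L := ih (n - 1) (by omega) w' hw'
  have hyw' : y ≠ w' := by rintro rfl; simp at hw'; omega
  have hyL' : y ∈ gLine G w' w := (mem_gLine_iff hw'w.ne).mpr <| Or.inr <| Or.inl <| by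
    rw [hw', dist_eq_one_iff_adj.mpr hw'w, hn]; omega
  exact hw (hP.gLine_eq hw'w.ne hxz' hyw' hyL' left_mem_gLine hyL hw'L ▸ right_mem_gLine)

lemma LinesMeetAtMostOnce.allCollinear [Finite V] (hP : G.LinesMeetAtMostOnce)
    (hconn : G.Connected) (hne : G ≠ ⊤) : G.AllCollinear := by
  obtain ⟨x, y, z, hxy, hyz, hxz⟩ := exists_adj_adj_dist_eq_two hconn hne
  have hL := hP.gLine_eq_univ hconn hxy hyz hxz
  have hxz' : x ≠ z := by rintro rfl; simp at hxz
  intro u v w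
  rcases eq_or_ne u v with rfl | huv
  · exact Or.inr (Or.inl (by simp))
  have huvL : gLine G u v = gLine G x z :=
    hP.gLine_eq huv hxz' huv left_mem_gLine right_mem_gLine (hL ▸ trivial) (hL ▸ trivial)
  exact (mem_gLine_iff huv).mp (huvL ▸ hL ▸ Set.mem_univ w)

lemma exists_dist_eq_of_le {k : ℕ} (hk : k ≤ G.dist x y) : ∃ v, G.dist x v = k := by
  induction h : G.dist x y generalizing y with
  | zero => exact ⟨y, by omega⟩
  | succ n ih =>
    rcases (h ▸ hk).eq_or_lt with rfl | hlt
    · exact ⟨y, h⟩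
    obtain ⟨w, -, hw⟩ := exists_adj_dist_eq_of_dist_eq_succ h
    exact ih (by omega) hw

lemma nonempty_iso_pathGraph_of_injective_dist (hinj : Function.Injective (G.dist x))
    (hmax : ∀ v, G.dist x v ≤ G.dist x y) : Nonempty (G ≃g pathGraph (G.dist x y + 1)) := by
  let f : V → Fin (G.dist x y + 1) := fun v => ⟨G.dist x v, Nat.lt_succ_of_le (hmax v)⟩
  have hf : Function.Bijective f := by
    refine ⟨fun a b hab => hinj (Fin.mk.inj_iff.mp hab), fun k => ?_⟩
    obtain ⟨v, hv⟩ := exists_dist_eq_of_le (Nat.le_of_lt_succ k.isLt)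
    exact ⟨v, Fin.ext hv⟩
  refine ⟨⟨Equiv.ofBijective f hf, @fun a b => ?_⟩⟩
  simp only [Equiv.ofBijective_apply, pathGraph_adj, f]
  constructor
  · rintro (h | h)
    · obtain ⟨w, hw, hwa⟩ := exists_adj_dist_eq_of_dist_eq_succ h.symm
      exact hinj hwa ▸ hw
    · obtain ⟨w, hw, hwb⟩ := exists_adj_dist_eq_of_dist_eq_succ h.symm
      exact (hinj hwb ▸ hw).symm
  · intro hab
    have hne : G.dist x a ≠ G.dist x b := fun h => hab.ne (hinj h)
    rcases hab.diff_dist_adj (u := x) with h | h | h <;> omega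

lemma nonempty_iso_cycleGraph_four_of_dist {a b c d : V} (hab : G.dist a b = 1)
    (hbc : G.dist b c = 1) (hcd : G.dist c d = 1) (had : G.dist a d = 1) (hac : G.dist a c = 2)
    (hbd : G.dist b d = 2)
    (hcover : ∀ w, w = a ∨ w = b ∨ w = c ∨ w = d) : Nonempty (cycleGraph 4 ≃g G) := by
  let f : Fin 4 → V := ![a, b, c, d]
  have hdist : ∀ i j, G.dist (f i) (f j) = (cycleGraph 4).dist i j := by
    have hcomm := @dist_comm _ G
    intro i j
    fin_cases i <;> fin_cases j <;> simp +decide [f, cycleGraph_four_dist, *]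
  have hinj : Function.Injective f := fun i j h => by
    have := hdist i j
    rw [h, dist_self, cycleGraph_four_dist] at this
    split_ifs at this with hij
    exact hij
  have hsurj : Function.Surjective f := fun w => by
    rcases hcover w with rfl | rfl | rfl | rfl
    exacts [⟨0, rfl⟩, ⟨1, rfl⟩, ⟨2, rfl⟩, ⟨3, rfl⟩]
  refine ⟨⟨Equiv.ofBijective f ⟨hinj, hsurj⟩, @fun i j => ?_⟩⟩
  change G.Adj (f i) (f j) ↔ _
  rw [← dist_eq_one_iff_adj, ← dist_eq_one_iff_adj, hdist]

lemma AllCollinear.dist_eq_two_mul (hcol : G.AllCollinear) (hconn : G.Connected) (huv : u ≠ v)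
    (h : G.dist x u = G.dist x v) : G.dist u v = 2 * G.dist x u := by
  have hpos := hconn.pos_dist_of_ne huv
  have hu : G.dist u x = G.dist x u := dist_comm
  have hv : G.dist v x = G.dist x v := dist_comm
  rcases hcol u v x with h' | h' | h' <;> omega

lemma AllCollinear.dist_add_dist_eq_diam [Finite V] (hcol : G.AllCollinear)
    (hconn : G.Connected) (hxy : G.dist x y = G.diam) (v : V) :
    G.dist x v + G.dist v y = G.diam := by
  have := hconn.nonempty
  have hdiam := connected_iff_ediam_ne_top.mp hconn
  have hvx := dist_le_diam hdiam (u := v) (v := x)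
  have hyv := dist_le_diam hdiam (u := y) (v := v)
  have hx : G.dist v x = G.dist x v := dist_comm
  have hy : G.dist y v = G.dist v y := dist_comm
  rcases hcol x y v with h | h | h <;> omega

lemma AllCollinear.diam_eq_two_mul [Finite V] (hcol : G.AllCollinear) (hconn : G.Connected)
    (hxy : G.dist x y = G.diam) (huv : u ≠ v) (h : G.dist x u = G.dist x v) :
    G.diam = 2 * G.dist x u := by
  have hu := hcol.dist_add_dist_eq_diam hconn hxy u
  have hv := hcol.dist_add_dist_eq_diam hconn hxy v
  have hx := hcol.dist_eq_two_mul hconn huv h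
  have hyu : G.dist y u = G.dist u y := dist_comm
  have hy := hcol.dist_eq_two_mul (x := y) hconn huv
    (by rw [hyu, dist_comm (u := y)]; omega)
  omega

lemma AllCollinear.nonempty_iso_cycleGraph_four [Finite V] (hcol : G.AllCollinear)
    (hconn : G.Connected) (hxy : G.dist x y = G.diam) (huv : u ≠ v)
    (h : G.dist x u = G.dist x v) : Nonempty (cycleGraph 4 ≃g G) := by
  have hD := hcol.diam_eq_two_mul hconn hxy huv h
  have huv2 := hcol.dist_eq_two_mul hconn huv h
  have hpos := hconn.pos_dist_of_ne huv
  obtain ⟨p, hpu, hp⟩ :=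
    exists_adj_dist_eq_of_dist_eq_succ (show G.dist x u = (G.dist x u - 1) + 1 by omega)
  obtain ⟨q, hqv, hq⟩ :=
    exists_adj_dist_eq_of_dist_eq_succ (show G.dist x v = (G.dist x u - 1) + 1 by omega)
  -- Two distinct vertices on a common level would force `diam = 2 * level`, so `u, v` share
  -- their predecessor, and then `dist u v ≤ 2` pins everything down.
  obtain rfl : p = q := by
    by_contra hpq
    have := hcol.diam_eq_two_mul hconn hxy hpq (hp.trans hq.symm)
    omega
  have htri : G.dist u v ≤ G.dist u p + G.dist p v := hconn.dist_triangle
  rw [dist_comm (u := u) (v := p), dist_eq_one_iff_adj.mpr hpu, dist_eq_one_iff_adj.mpr hqv] at htri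
  have hxu : G.dist x u = 1 := by omega
  have hsum := hcol.dist_add_dist_eq_diam hconn hxy
  refine nonempty_iso_cycleGraph_four_of_dist (b := u) (c := y) (d := v) hxu
    (by have := hsum u; omega) (by have := hsum v; rw [dist_comm]; omega) (by omega) (by omega)
    (by omega) fun w => ?_
  have hw := hsum w
  rcases Nat.lt_trichotomy (G.dist x w) 1 with h0 | h1 | h2
  · exact .inl (hconn.dist_eq_zero_iff.mp (by omega)).symm
  · by_contra! hne
    have hwu := hcol.dist_eq_two_mul hconn hne.2.1 (h1.trans hxu.symm)
    have hwv := hcol.dist_eq_two_mul hconn hne.2.2.2 (h1.trans (hxu.symm.trans h))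
    have hcu : G.dist u w = G.dist w u := dist_comm
    have hcv : G.dist v w = G.dist w v := dist_comm
    rcases hcol u v w with h' | h' | h' <;> omega
  · exact .inr (.inr (.inl (hconn.dist_eq_zero_iff.mp (by omega))))

lemma AllCollinear.nonempty_iso_pathGraph_or_cycleGraph_four [Finite V] (hcol : G.AllCollinear)
    (hconn : G.Connected) :
    (∃ n, Nonempty (G ≃g pathGraph n)) ∨ Nonempty (G ≃g cycleGraph 4) := by
  have := hconn.nonempty
  obtain ⟨x, y, hxy⟩ := G.exists_dist_eq_diam
  by_cases hinj : Function.Injective (G.dist x)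
  · refine .inl ⟨_, nonempty_iso_pathGraph_of_injective_dist (y := y) hinj fun v => ?_⟩
    exact hxy ▸ dist_le_diam (connected_iff_ediam_ne_top.mp hconn)
  · obtain ⟨u, v, h, huv⟩ : ∃ u v, G.dist x u = G.dist x v ∧ u ≠ v := by
      simpa [Function.Injective] using hinj
    exact .inr ((hcol.nonempty_iso_cycleGraph_four hconn hxy huv h).map Iso.symm)

end SimpleGraph

theorem stmt_10_general (V : Type*) [Fintype V] (G : SimpleGraph V) (hconn : G.Connected) :
    (∀ L₁ ∈ gLines G, ∀ L₂ ∈ gLines G, L₁ ≠ L₂ → (L₁ ∩ L₂).ncard ≤ 1) ↔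
      (G = ⊤ ∨ (∃ n : ℕ, Nonempty (G ≃g SimpleGraph.pathGraph n)) ∨
        Nonempty (G ≃g SimpleGraph.cycleGraph 4)) := by
  constructor
  · intro hP
    by_cases htop : G = ⊤
    · exact .inl htop
    · have hcol := SimpleGraph.LinesMeetAtMostOnce.allCollinear hP hconn htop
      exact .inr (hcol.nonempty_iso_pathGraph_or_cycleGraph_four hconn)
  · rintro (rfl | ⟨n, ⟨e⟩⟩ | ⟨⟨e⟩⟩)
    · exact SimpleGraph.linesMeetAtMostOnce_top
    · exact ((SimpleGraph.allCollinear_pathGraph n).of_iso e).linesMeetAtMostOnce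
    · exact (SimpleGraph.allCollinear_cycleGraph_four.of_iso e).linesMeetAtMostOnce

theorem stmt_10 (V : Type*) [Fintype V] (G : SimpleGraph V) (hconn : G.Connected)
    (h2 : 2 ≤ Fintype.card V) :
    (∀ L₁ ∈ gLines G, ∀ L₂ ∈ gLines G, L₁ ≠ L₂ → (L₁ ∩ L₂).ncard ≤ 1) ↔
      (G = ⊤ ∨ (∃ n : ℕ, Nonempty (G ≃g SimpleGraph.pathGraph n)) ∨
        Nonempty (G ≃g SimpleGraph.cycleGraph 4)) :=
  stmt_10_general V G hconn
end

section
/- There is a constant c > 0 such that every pseudometric betweenness on a finite set of n points (n ≥ 2) has at least c·n^{2/5} distinct lines or a universal line. -/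
/-- A ternary relation `B` (read `B u v w` as "`v` lies between `u` and `w`") is a
pseudometric betweenness if it satisfies Menger's axioms (M0)–(M3). -/
def IsPseudometricBetweenness {V : Type*} (B : V → V → V → Prop) : Prop :=
  (∀ u v w : V, B u v w → u ≠ v ∧ v ≠ w ∧ u ≠ w) ∧
  (∀ u v w : V, B u v w → B w v u) ∧
  (∀ u v w : V, B u v w → ¬ B u w v) ∧
  (∀ u v w x : V, B u v w → B u w x → B u v x ∧ B v w x)

/-- The line determined by `x` and `y` in a betweenness `B`. -/
def bLine {V : Type*} (B : V → V → V → Prop) (x y : V) : Set V :=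
  {x, y} ∪ {z | B x y z ∨ B y z x ∨ B z x y}

/-- The set of all (distinct) lines of the betweenness `B`. -/
def bLines {V : Type*} (B : V → V → V → Prop) : Set (Set V) :=
  {L | ∃ x y : V, x ≠ y ∧ L = bLine B x y}

namespace Stmt18Aux

set_option linter.unusedSectionVars false
set_option linter.unusedVariables false
open scoped Classical

variable {V : Type} [Fintype V] {B : V → V → V → Prop}

lemma mem_bLine_iff {x y z : V} :
    z ∈ bLine B x y ↔ z = x ∨ z = y ∨ B x y z ∨ B y z x ∨ B z x y := by
  simp only [bLine, Set.mem_union, Set.mem_insert_iff, Set.mem_singleton_iff, Set.mem_setOf_eq]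
  tauto

lemma left_mem_bLine {x y : V} : x ∈ bLine B x y := mem_bLine_iff.2 (Or.inl rfl)

lemma right_mem_bLine {x y : V} : y ∈ bLine B x y := mem_bLine_iff.2 (Or.inr (Or.inl rfl))

lemma bLine_mem_bLines {x y : V} (h : x ≠ y) : bLine B x y ∈ bLines B := ⟨x, y, h, rfl⟩

lemma image_card_le_ncard {α : Type*} (s : Finset α) (f : α → Set V)
    (hmem : ∀ i ∈ s, f i ∈ bLines B) : (s.image f).card ≤ (bLines B).ncard := by
  classical
  have hsub : ↑(s.image f) ⊆ bLines B := by
    intro L hL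
    rw [Finset.coe_image] at hL
    obtain ⟨i, hi, rfl⟩ := hL
    exact hmem i hi
  calc (s.image f).card = (↑(s.image f) : Set (Set V)).ncard := (Set.ncard_coe_finset _).symm
    _ ≤ (bLines B).ncard := Set.ncard_le_ncard hsub (Set.toFinite _)

lemma card_le_ncard_of_inj {α : Type*} (s : Finset α) (f : α → Set V)
    (hmem : ∀ i ∈ s, f i ∈ bLines B) (hinj : Set.InjOn f ↑s) :
    s.card ≤ (bLines B).ncard := by
  classical
  calc s.card = (s.image f).card := (Finset.card_image_of_injOn hinj).symm
    _ ≤ (bLines B).ncard := image_card_le_ncard s f hmem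

lemma card_le_bound_mul {α β : Type*} [DecidableEq β] (s : Finset α) (f : α → β) (n : ℕ)
    (hf : ∀ b ∈ s.image f, (s.filter fun a => f a = b).card ≤ n) :
    s.card ≤ n * (s.image f).card := by
  classical
  calc s.card = ∑ b ∈ s.image f, (s.filter fun a => f a = b).card :=
        Finset.card_eq_sum_card_image f s
    _ ≤ ∑ _b ∈ s.image f, n := Finset.sum_le_sum hf
    _ = (s.image f).card * n := by rw [Finset.sum_const, smul_eq_mul]
    _ = n * (s.image f).card := mul_comm _ _

section Axioms

variable (m0 : ∀ u v w : V, B u v w → u ≠ v ∧ v ≠ w ∧ u ≠ w)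
variable (m1 : ∀ u v w : V, B u v w → B w v u)
variable (m2 : ∀ u v w : V, B u v w → ¬ B u w v)
variable (m3 : ∀ u v w x : V, B u v w → B u w x → B u v x ∧ B v w x)

include m1 m2 m3 in
/-- If `D` is a set of points pairwise having `x` strictly between them, then no third point
of `D` lies on the line of two points of `D`. -/
lemma noThird {x : V} {D : Finset V}
    (hD : ∀ z ∈ D, ∀ z' ∈ D, z ≠ z' → B z x z')
    {z z' u : V} (hz : z ∈ D) (hz' : z' ∈ D) (hu : u ∈ D)
    (hzz' : z ≠ z') (huz : u ≠ z) (huz' : u ≠ z') :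
    u ∉ bLine B z z' := by
  intro hmem
  rcases mem_bLine_iff.1 hmem with h | h | h | h | h
  · exact huz h
  · exact huz' h
  · -- h : B z z' u
    have h1 : B z x z' := hD z hz z' hz' hzz'
    have h2 := m3 z x z' u h1 h
    have h3 : B u z' x := m1 _ _ _ h2.2
    exact m2 _ _ _ h3 (hD u hu z' hz' huz')
  · -- h : B z' u z
    have h1 : B z u z' := m1 _ _ _ h
    have h2 : B z x u := hD z hz u hu (Ne.symm huz)
    have h3 := m3 z x u z' h2 h1
    have h4 : B z' u x := m1 _ _ _ h3.2
    exact m2 _ _ _ h4 (hD z' hz' u hu (Ne.symm huz'))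
  · -- h : B u z z'
    have h1 : B z' z u := m1 _ _ _ h
    have h2 : B z' x z := hD z' hz' z hz (Ne.symm hzz')
    have h3 := m3 z' x z u h2 h1
    have h4 : B u z x := m1 _ _ _ h3.2
    exact m2 _ _ _ h4 (hD u hu z hz huz)

include m0 m1 m2 m3 in
/-- An "antichain" (pairwise `x`-separated set) has size at most `O(sqrt k)`. -/
lemma antichain_sq_le {x : V} {D : Finset V}
    (hD : ∀ z ∈ D, ∀ z' ∈ D, z ≠ z' → B z x z')
    (hk : 1 ≤ (bLines B).ncard) :
    D.card * D.card ≤ 9 * (bLines B).ncard := by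
  classical
  set k := (bLines B).ncard with hkdef
  have hoff : D.offDiag.card ≤ 2 * k := by
    have hfib : ∀ L ∈ D.offDiag.image (fun p => bLine B p.1 p.2),
        (D.offDiag.filter fun q => bLine B q.1 q.2 = L).card ≤ 2 := by
      intro L hL
      obtain ⟨p, hp, rfl⟩ := Finset.mem_image.1 hL
      obtain ⟨hp1, hp2, hp12⟩ := Finset.mem_offDiag.1 hp
      have hsub : (D.offDiag.filter fun q => bLine B q.1 q.2 = bLine B p.1 p.2)
          ⊆ {(p.1, p.2), (p.2, p.1)} := by
        intro q hq
        obtain ⟨hqD, hqe⟩ := Finset.mem_filter.1 hq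
        obtain ⟨hq1, hq2, hq12⟩ := Finset.mem_offDiag.1 hqD
        have hq1mem : q.1 ∈ bLine B p.1 p.2 := by
          rw [← hqe]; exact left_mem_bLine
        have hq2mem : q.2 ∈ bLine B p.1 p.2 := by
          rw [← hqe]; exact right_mem_bLine
        have hq1in : q.1 = p.1 ∨ q.1 = p.2 := by
          by_contra hcon
          push_neg at hcon
          exact noThird m1 m2 m3 hD hp1 hp2 hq1 hp12 hcon.1 hcon.2 hq1mem
        have hq2in : q.2 = p.1 ∨ q.2 = p.2 := by
          by_contra hcon
          push_neg at hcon
          exact noThird m1 m2 m3 hD hp1 hp2 hq2 hp12 hcon.1 hcon.2 hq2mem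
        simp only [Finset.mem_insert, Finset.mem_singleton]
        rcases hq1in with h1 | h1 <;> rcases hq2in with h2 | h2
        · exact absurd (h1.trans h2.symm) hq12
        · left; exact Prod.ext h1 h2
        · right; exact Prod.ext h1 h2
        · exact absurd (h1.trans h2.symm) hq12
      calc (D.offDiag.filter fun q => bLine B q.1 q.2 = bLine B p.1 p.2).card
          ≤ ({(p.1, p.2), (p.2, p.1)} : Finset (V × V)).card := Finset.card_le_card hsub
        _ ≤ 2 := Finset.card_insert_le _ _ |>.trans (by simp)
    have h1 := card_le_bound_mul D.offDiag (fun p => bLine B p.1 p.2) 2 hfib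
    have h2 : (D.offDiag.image (fun p => bLine B p.1 p.2)).card ≤ k := by
      apply image_card_le_ncard
      intro p hp
      obtain ⟨_, _, hne⟩ := Finset.mem_offDiag.1 hp
      exact bLine_mem_bLines hne
    calc D.offDiag.card ≤ 2 * (D.offDiag.image (fun p => bLine B p.1 p.2)).card := h1
      _ ≤ 2 * k := by omega
  rw [Finset.offDiag_card] at hoff
  rcases le_or_gt D.card 3 with h3 | h4
  · calc D.card * D.card ≤ 3 * 3 := Nat.mul_le_mul h3 h3
      _ ≤ 9 * k := by omega
  · have h5 : 4 * D.card ≤ D.card * D.card := Nat.mul_le_mul_right _ h4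
    omega

include m0 m1 m3 in
/-- A chain `c 0 <_a c 1 <_a ... <_a c (m-1)` all of whose points span the same line `N`
through the apex `a` has length at most `2k+1`, provided no line is universal. -/
lemma chain_card_le (hno : ∀ x y : V, x ≠ y → bLine B x y ≠ Set.univ)
    (a : V) (N : Set V) (m : ℕ) (c : ℕ → V)
    (hc : ∀ i j, i < j → j < m → B a (c i) (c j))
    (hl : ∀ i, i < m → bLine B a (c i) = N) :
    m ≤ 2 * (bLines B).ncard + 1 := by
  classical
  set k := (bLines B).ncard with hkdef
  rcases Nat.lt_or_ge m 2 with hm | hm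
  · omega
  -- inner betweenness along the chain
  have hinner : ∀ i j l, i < j → j < l → l < m → B (c i) (c j) (c l) := by
    intro i j l hij hjl hlm
    exact (m3 a (c i) (c j) (c l) (hc i j hij (lt_trans hjl hlm)) (hc j l hjl hlm)).2
  have hne_c : ∀ i j, i < j → j < m → c i ≠ c j := by
    intro i j hij hjm
    exact (m0 _ _ _ (hc i j hij hjm)).2.1
  have hne_a : ∀ i, i < m → a ≠ c i := by
    intro i him
    rcases Nat.lt_or_ge (i + 1) m with h | h
    · exact (m0 _ _ _ (hc i (i + 1) (Nat.lt_succ_self i) h)).1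
    · have h0i : 0 < i := by omega
      exact (m0 _ _ _ (hc 0 i h0i him)).2.2
  -- all chain points (and the apex) belong to every gap line
  have hmemL : ∀ ι t, ι + 1 < m → t < m → c t ∈ bLine B (c ι) (c (ι + 1)) := by
    intro ι t hι ht
    rcases lt_trichotomy t ι with h | h | h
    · exact mem_bLine_iff.2 (Or.inr (Or.inr (Or.inr (Or.inr
        (hinner t ι (ι + 1) h (Nat.lt_succ_self _) hι)))))
    · exact mem_bLine_iff.2 (Or.inl (by rw [h]))
    · rcases Nat.eq_or_lt_of_le (Nat.succ_le_of_lt h) with he | hlt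
      · exact mem_bLine_iff.2 (Or.inr (Or.inl (by rw [← he])))
      · exact mem_bLine_iff.2 (Or.inr (Or.inr (Or.inl
          (hinner ι (ι + 1) t (Nat.lt_succ_self _) hlt ht))))
  have hmemLa : ∀ ι, ι + 1 < m → a ∈ bLine B (c ι) (c (ι + 1)) := by
    intro ι hι
    exact mem_bLine_iff.2 (Or.inr (Or.inr (Or.inr (Or.inr (hc ι (ι + 1) (Nat.lt_succ_self _) hι)))))
  -- choose witnesses off the gap lines
  have hwit : ∀ ι : ℕ, ∃ w : V, ι + 1 < m → w ∉ bLine B (c ι) (c (ι + 1)) := by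
    intro ι
    by_cases hι : ι + 1 < m
    · have hne := hne_c ι (ι + 1) (Nat.lt_succ_self ι) hι
      rcases (Set.ne_univ_iff_exists_notMem _).1 (hno _ _ hne) with ⟨w, hw⟩
      exact ⟨w, fun _ => hw⟩
    · exact ⟨a, fun h => absurd h hι⟩
  choose w hw using hwit
  have hw_ne_c : ∀ ι t, ι + 1 < m → t < m → w ι ≠ c t := by
    intro ι t hι ht h
    exact hw ι hι (h ▸ hmemL ι t hι ht)
  have hw_ne_a : ∀ ι, ι + 1 < m → w ι ≠ a := by
    intro ι hι h
    exact hw ι hι (h ▸ hmemLa ι hι)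
  -- Key fact for cuts with witness off N :
  -- the line through (w ι) and (c ι) contains no later chain point.
  have hAkey : ∀ ι t, ι + 1 < m → t < m → ι < t → w ι ∉ N →
      c t ∉ bLine B (w ι) (c ι) := by
    intro ι t hι ht hιt hwN hmem
    rcases mem_bLine_iff.1 hmem with h | h | h | h | h
    · exact hw_ne_c ι t hι ht h.symm
    · exact hne_c ι t hιt ht h.symm
    · -- edge-left : B (w ι) (c ι) (c t)
      rcases Nat.eq_or_lt_of_le (Nat.succ_le_of_lt hιt) with he | hlt
      · -- t = ι + 1
        exact hw ι hι (mem_bLine_iff.2 (Or.inr (Or.inr (Or.inr (Or.inr (by rw [show ι+1 = t from he]; exact h))))))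
      · have h1 : B (c t) (c ι) (w ι) := m1 _ _ _ h
        have h2 : B (c t) (c (ι + 1)) (c ι) :=
          m1 _ _ _ (hinner ι (ι + 1) t (Nat.lt_succ_self _) hlt ht)
        have h3 := m3 _ _ _ _ h2 h1
        exact hw ι hι (mem_bLine_iff.2 (Or.inr (Or.inr (Or.inr (Or.inr (m1 _ _ _ h3.2))))))
    · -- edge-right : B (c ι) (c t) (w ι)
      rcases Nat.eq_or_lt_of_le (Nat.succ_le_of_lt hιt) with he | hlt
      · exact hw ι hι (mem_bLine_iff.2 (Or.inr (Or.inr (Or.inl (by rw [show ι+1 = t from he]; exact h)))))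
      · have hch : B (c ι) (c (ι + 1)) (c t) := hinner ι (ι + 1) t (Nat.lt_succ_self _) hlt ht
        have h3 := (m3 (c ι) (c (ι + 1)) (c t) (w ι) hch h).1
        exact hw ι hι (mem_bLine_iff.2 (Or.inr (Or.inr (Or.inl h3))))
    · -- mid : B (c t) (w ι) (c ι)  forces  w ι ∈ N
      have h1 : B (c t) (c ι) a := m1 _ _ _ (hc ι t hιt ht)
      have h2 := m3 (c t) (w ι) (c ι) a h h1
      have h3 : w ι ∈ bLine B a (c t) :=
        mem_bLine_iff.2 (Or.inr (Or.inr (Or.inr (Or.inl h2.1))))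
      rw [hl t ht] at h3
      exact hwN h3
  -- Key fact for cuts whose witness lies on N :
  -- the witness of cut ι lies on every later gap line.
  have hBkey : ∀ ι ι', ι + 1 < m → ι' + 1 < m → ι < ι' → w ι ∈ N →
      w ι ∈ bLine B (c ι') (c (ι' + 1)) := by
    intro ι ι' hι hι' hlt hwN
    have hpos : ∀ t, t < m → B a (c t) (w ι) ∨ B (c t) (w ι) a ∨ B (w ι) a (c t) := by
      intro t ht
      have hu : w ι ∈ bLine B a (c t) := by rw [hl t ht]; exact hwN
      rcases mem_bLine_iff.1 hu with h | h | h | h | h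
      · exact absurd h (hw_ne_a ι hι)
      · exact absurd h (hw_ne_c ι t hι ht)
      · exact Or.inl h
      · exact Or.inr (Or.inl h)
      · exact Or.inr (Or.inr h)
    have hnc : ¬ (B (c ι) (c (ι + 1)) (w ι) ∨ B (c (ι + 1)) (w ι) (c ι) ∨
        B (w ι) (c ι) (c (ι + 1))) := by
      intro h
      refine hw ι hι (mem_bLine_iff.2 ?_)
      tauto
    have hchain : B a (c ι) (c (ι + 1)) := hc ι (ι + 1) (Nat.lt_succ_self _) hι
    have hιm : ι < m := by omega
    have hι1m : ι + 1 < m := hι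
    -- position at ι is "L" : B (w ι) a (c ι)
    have hL : B (w ι) a (c ι) := by
      rcases hpos ι hιm with hR | hM | hL
      · rcases hpos (ι + 1) hι1m with hR' | hM' | hL'
        · exact absurd (Or.inl (m3 a (c ι) (c (ι + 1)) (w ι) hchain hR').2) hnc
        · have hM'' : B a (w ι) (c (ι + 1)) := m1 _ _ _ hM'
          have h1 := (m3 a (c ι) (w ι) (c (ι + 1)) hR hM'').2
          exact absurd (Or.inr (Or.inl (m1 _ _ _ h1))) hnc
        · have h1 : B (w ι) (c ι) a := m1 _ _ _ hR
          have h2 := (m3 (w ι) (c ι) a (c (ι + 1)) h1 hL').1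
          exact absurd (Or.inr (Or.inr h2)) hnc
      · have h1 : B a (w ι) (c ι) := m1 _ _ _ hM
        have h2 := (m3 a (w ι) (c ι) (c (ι + 1)) h1 hchain).2
        exact absurd (Or.inr (Or.inr h2)) hnc
      · exact hL
    -- position at ι+1 is "M" : B a (w ι) (c (ι+1))
    have hM1 : B a (w ι) (c (ι + 1)) := by
      rcases hpos (ι + 1) hι1m with hR' | hM' | hL'
      · have h1 : B (w ι) (c (ι + 1)) a := m1 _ _ _ hR'
        have h2 := (m3 (w ι) (c (ι + 1)) a (c ι) h1 hL).1
        exact absurd (Or.inl (m1 _ _ _ h2)) hnc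
      · exact m1 _ _ _ hM'
      · have h1 : B (c (ι + 1)) (c ι) a := m1 _ _ _ hchain
        have h2 : B (c (ι + 1)) a (w ι) := m1 _ _ _ hL'
        have h3 := (m3 (c (ι + 1)) (c ι) a (w ι) h1 h2).1
        exact absurd (Or.inr (Or.inr (m1 _ _ _ h3))) hnc
    -- propagate M up to ι'
    have hMι' : B a (w ι) (c ι') := by
      rcases Nat.eq_or_lt_of_le (Nat.succ_le_of_lt hlt) with he | hlt2
      · rw [← he]; exact hM1
      · exact (m3 a (w ι) (c (ι + 1)) (c ι') hM1 (hc (ι + 1) ι' hlt2 (by omega))).1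
    have hcoll := (m3 a (w ι) (c ι') (c (ι' + 1)) hMι'
      (hc ι' (ι' + 1) (Nat.lt_succ_self _) hι')).2
    exact mem_bLine_iff.2 (Or.inr (Or.inr (Or.inr (Or.inr hcoll))))
  -- count the cuts
  set Ac := (Finset.range (m - 1)).filter (fun ι => w ι ∉ N) with hAc
  set Bc := (Finset.range (m - 1)).filter (fun ι => w ι ∈ N) with hBc
  have hcut : ∀ ι ∈ Finset.range (m - 1), ι + 1 < m := by
    intro ι hι
    have := Finset.mem_range.1 hι
    omega
  have hAcard : Ac.card ≤ k := by
    apply card_le_ncard_of_inj Ac (fun ι => bLine B (w ι) (c ι))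
    · intro ι hι
      have hι' := hcut ι (Finset.mem_filter.1 hι).1
      exact bLine_mem_bLines (hw_ne_c ι ι hι' (by omega))
    · intro i hi j hj heq
      rw [Finset.mem_coe, hAc, Finset.mem_filter] at hi hj
      have heq2 : bLine B (w i) (c i) = bLine B (w j) (c j) := heq
      by_contra hne
      rcases Nat.lt_or_gt_of_ne hne with hlt | hlt
      · have hj' := hcut j hj.1
        have hi' := hcut i hi.1
        have hmem : c j ∈ bLine B (w j) (c j) := right_mem_bLine
        rw [← heq2] at hmem
        exact hAkey i j hi' (by omega) hlt hi.2 hmem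
      · have hi' := hcut i hi.1
        have hj' := hcut j hj.1
        have hmem : c i ∈ bLine B (w i) (c i) := right_mem_bLine
        rw [heq2] at hmem
        exact hAkey j i hj' (by omega) hlt hj.2 hmem
  have hBcard : Bc.card ≤ k := by
    apply card_le_ncard_of_inj Bc (fun ι => bLine B (c ι) (c (ι + 1)))
    · intro ι hι
      have hι' := hcut ι (Finset.mem_filter.1 hι).1
      exact bLine_mem_bLines (hne_c ι (ι + 1) (Nat.lt_succ_self _) hι')
    · intro i hi j hj heq
      rw [Finset.mem_coe, hBc, Finset.mem_filter] at hi hj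
      have heq2 : bLine B (c i) (c (i + 1)) = bLine B (c j) (c (j + 1)) := heq
      by_contra hne
      rcases Nat.lt_or_gt_of_ne hne with hlt | hlt
      · have hmem := hBkey i j (hcut i hi.1) (hcut j hj.1) hlt hi.2
        rw [← heq2] at hmem
        exact hw i (hcut i hi.1) hmem
      · have hmem := hBkey j i (hcut j hj.1) (hcut i hi.1) hlt hj.2
        rw [heq2] at hmem
        exact hw j (hcut j hj.1) hmem
  have hsplit : Bc.card + Ac.card = m - 1 := by
    rw [hAc, hBc]
    rw [Finset.card_filter_add_card_filter_not]
    exact Finset.card_range _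
  omega

include m0 m1 m2 m3 in
/-- Any fibre of the map `y ↦ bLine x y` has size at most `(2k+1) * sqrt(9k)`. -/
lemma class_card_le (hno : ∀ x y : V, x ≠ y → bLine B x y ≠ Set.univ)
    (hk : 1 ≤ (bLines B).ncard)
    (x : V) (N : Set V) (C : Finset V)
    (hCx : ∀ y ∈ C, y ≠ x) (hCl : ∀ y ∈ C, bLine B x y = N) :
    C.card ≤ (2 * (bLines B).ncard + 1) * Nat.sqrt (9 * (bLines B).ncard) := by
  classical
  set k := (bLines B).ncard with hkdef
  have htrans : ∀ y y' y'' : V, B x y y' → B x y' y'' → B x y y'' :=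
    fun _ _ _ h1 h2 => (m3 _ _ _ _ h1 h2).1
  have hirr : ∀ y : V, ¬ B x y y := fun y h => (m0 _ _ _ h).2.1 rfl
  have hasym : ∀ y y' : V, B x y y' → ¬ B x y' y := fun y y' h h' => m2 _ _ _ h h'
  -- trichotomy inside the class
  have tri : ∀ y ∈ C, ∀ y' ∈ C, y ≠ y' → B x y y' ∨ B x y' y ∨ B y x y' := by
    intro y hy y' hy' hne
    have h1 : y' ∈ bLine B x y := by
      rw [hCl y hy, ← hCl y' hy']; exact right_mem_bLine
    rcases mem_bLine_iff.1 h1 with h | h | h | h | h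
    · exact absurd h (hCx y' hy')
    · exact absurd h.symm hne
    · exact Or.inl h
    · exact Or.inr (Or.inl (m1 _ _ _ h))
    · exact Or.inr (Or.inr (m1 _ _ _ h))
  -- every chain inside the class is short
  have hchain : ∀ s : Finset V, s ⊆ C →
      (∀ y ∈ s, ∀ y' ∈ s, y ≠ y' → B x y y' ∨ B x y' y) → s.card ≤ 2 * k + 1 := by
    intro s hsC hcomp
    set ht : V → ℕ := fun u => (s.filter fun y => B x y u).card with hht
    have hmono : ∀ u ∈ s, ∀ u' ∈ s, B x u u' → ht u < ht u' := by
      intro u hu u' hu' hB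
      apply Finset.card_lt_card
      rw [Finset.ssubset_iff_of_subset]
      · exact ⟨u, Finset.mem_filter.2 ⟨hu, hB⟩, fun hmem => hirr u (Finset.mem_filter.1 hmem).2⟩
      · intro y hy
        obtain ⟨hys, hyB⟩ := Finset.mem_filter.1 hy
        exact Finset.mem_filter.2 ⟨hys, htrans _ _ _ hyB hB⟩
    have hinj : Set.InjOn ht ↑s := by
      intro u hu u' hu' he
      rw [Finset.mem_coe] at hu hu'
      by_contra hne
      rcases hcomp u hu u' hu' hne with h | h
      · exact absurd he (Nat.ne_of_lt (hmono u hu u' hu' h))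
      · exact absurd he.symm (Nat.ne_of_lt (hmono u' hu' u hu h))
    have himglt : ∀ u ∈ s, ht u < s.card := by
      intro u hu
      have hsubs : s.filter (fun y => B x y u) ⊆ s.erase u := by
        intro y hy
        obtain ⟨hys, hyB⟩ := Finset.mem_filter.1 hy
        exact Finset.mem_erase.2 ⟨fun he => hirr u (he ▸ hyB), hys⟩
      calc ht u ≤ (s.erase u).card := Finset.card_le_card hsubs
        _ < s.card := Finset.card_erase_lt_of_mem hu
    have himg : s.image ht = Finset.range s.card := by
      apply Finset.eq_of_subset_of_card_le
      · intro i hi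
        obtain ⟨u, hu, rfl⟩ := Finset.mem_image.1 hi
        exact Finset.mem_range.2 (himglt u hu)
      · rw [Finset.card_range, Finset.card_image_of_injOn hinj]
    set cfun : ℕ → V := fun i => if h : ∃ u, u ∈ s ∧ ht u = i then h.choose else x with hcfun
    have hcspec : ∀ i, i < s.card → cfun i ∈ s ∧ ht (cfun i) = i := by
      intro i hi
      have hmem : i ∈ s.image ht := by rw [himg]; exact Finset.mem_range.2 hi
      obtain ⟨u, hu, hui⟩ := Finset.mem_image.1 hmem
      have hex : ∃ u, u ∈ s ∧ ht u = i := ⟨u, hu, hui⟩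
      have : cfun i = hex.choose := by rw [hcfun]; simp only [dif_pos hex]
      rw [this]
      exact hex.choose_spec
    have hc : ∀ i j, i < j → j < s.card → B x (cfun i) (cfun j) := by
      intro i j hij hj
      obtain ⟨hi1, hi2⟩ := hcspec i (lt_trans hij hj)
      obtain ⟨hj1, hj2⟩ := hcspec j hj
      have hne : cfun i ≠ cfun j := by
        intro he
        rw [he, hj2] at hi2
        omega
      rcases hcomp _ hi1 _ hj1 hne with h | h
      · exact h
      · have := hmono _ hj1 _ hi1 h
        rw [hi2, hj2] at this
        omega
    have hl' : ∀ i, i < s.card → bLine B x (cfun i) = N :=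
      fun i hi => hCl _ (hsC (hcspec i hi).1)
    exact chain_card_le m0 m1 m3 hno x N s.card cfun hc hl'
  -- the height function
  set S : V → Finset (Finset V) := fun z => C.powerset.filter
    (fun s => z ∈ s ∧ (∀ y ∈ s, y = z ∨ B x y z) ∧
      (∀ y ∈ s, ∀ y' ∈ s, y ≠ y' → B x y y' ∨ B x y' y)) with hS
  set hgt : V → ℕ := fun z => (S z).sup Finset.card with hhgt
  have hsingle : ∀ z ∈ C, {z} ∈ S z := by
    intro z hz
    rw [hS]
    refine Finset.mem_filter.2 ⟨Finset.mem_powerset.2 (by simpa using hz), ?_, ?_, ?_⟩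
    · exact Finset.mem_singleton_self z
    · intro y hy; exact Or.inl (Finset.mem_singleton.1 hy)
    · intro y hy y' hy' hne
      exact absurd ((Finset.mem_singleton.1 hy).trans (Finset.mem_singleton.1 hy').symm) hne
  have hgt_pos : ∀ z ∈ C, 1 ≤ hgt z := by
    intro z hz
    calc 1 = ({z} : Finset V).card := (Finset.card_singleton z).symm
      _ ≤ hgt z := Finset.le_sup (hsingle z hz)
  have hgt_le : ∀ z, hgt z ≤ 2 * k + 1 := by
    intro z
    apply Finset.sup_le
    intro s hs
    rw [hS] at hs
    have h := Finset.mem_filter.1 hs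
    exact hchain s (Finset.mem_powerset.1 h.1) h.2.2.2
  have hgt_mono : ∀ z ∈ C, ∀ z' ∈ C, B x z z' → hgt z < hgt z' := by
    intro z hz z' hz' hB
    have hnz : (S z).Nonempty := ⟨{z}, hsingle z hz⟩
    obtain ⟨s, hsmem, hscard⟩ := Finset.exists_mem_eq_sup (S z) hnz Finset.card
    rw [hS] at hsmem
    have hmf := Finset.mem_filter.1 hsmem
    have hpow := Finset.mem_powerset.1 hmf.1
    have hsle := hmf.2.2.1
    have hscomp := hmf.2.2.2
    have hz'ns : z' ∉ s := by
      intro hmem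
      rcases hsle z' hmem with he | hB'
      · exact (m0 _ _ _ hB).2.1 he.symm
      · exact hasym _ _ hB hB'
    have hins : insert z' s ∈ S z' := by
      rw [hS]
      refine Finset.mem_filter.2 ⟨Finset.mem_powerset.2 ?_, ?_, ?_, ?_⟩
      · exact Finset.insert_subset hz' hpow
      · exact Finset.mem_insert_self _ _
      · intro y hy
        rcases Finset.mem_insert.1 hy with he | hys
        · exact Or.inl he
        · rcases hsle y hys with he | hB'
          · exact Or.inr (he ▸ hB)
          · exact Or.inr (htrans _ _ _ hB' hB)
      · intro y hy y' hy' hne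
        have hcompz' : ∀ u ∈ s, B x u z' := by
          intro u hu
          rcases hsle u hu with he | hB'
          · exact he ▸ hB
          · exact htrans _ _ _ hB' hB
        rcases Finset.mem_insert.1 hy with he | hys <;> rcases Finset.mem_insert.1 hy' with he' | hys'
        · exact absurd (he.trans he'.symm) hne
        · exact Or.inr (he ▸ hcompz' y' hys')
        · exact Or.inl (he' ▸ hcompz' y hys)
        · exact hscomp y hys y' hys' hne
    calc hgt z = s.card := hscard
      _ < (insert z' s).card := by rw [Finset.card_insert_of_notMem hz'ns]; omega
      _ ≤ hgt z' := Finset.le_sup hins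
  -- fibres of the height function are antichains
  have hfib : ∀ d ∈ C.image hgt, (C.filter fun z => hgt z = d).card ≤ Nat.sqrt (9 * k) := by
    intro d _
    set D := C.filter (fun z => hgt z = d) with hD
    have hDanti : ∀ z ∈ D, ∀ z' ∈ D, z ≠ z' → B z x z' := by
      intro z hz z' hz' hne
      obtain ⟨hzC, hzd⟩ := Finset.mem_filter.1 hz
      obtain ⟨hz'C, hz'd⟩ := Finset.mem_filter.1 hz'
      rcases tri z hzC z' hz'C hne with h | h | h
      · have := hgt_mono z hzC z' hz'C h; omega
      · have := hgt_mono z' hz'C z hzC h; omega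
      · exact h
    have := antichain_sq_le m0 m1 m2 m3 hDanti hk
    exact Nat.le_sqrt.2 this
  have himgcard : (C.image hgt).card ≤ 2 * k + 1 := by
    have hsubs : C.image hgt ⊆ Finset.Icc 1 (2 * k + 1) := by
      intro d hd
      obtain ⟨z, hz, rfl⟩ := Finset.mem_image.1 hd
      exact Finset.mem_Icc.2 ⟨hgt_pos z hz, hgt_le z⟩
    calc (C.image hgt).card ≤ (Finset.Icc 1 (2 * k + 1)).card := Finset.card_le_card hsubs
      _ = 2 * k + 1 := by rw [Nat.card_Icc]; omega
  calc C.card ≤ Nat.sqrt (9 * k) * (C.image hgt).card := card_le_bound_mul C hgt _ hfib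
    _ ≤ Nat.sqrt (9 * k) * (2 * k + 1) := Nat.mul_le_mul_left _ himgcard
    _ = (2 * k + 1) * Nat.sqrt (9 * k) := mul_comm _ _

include m0 m1 m2 m3 in
lemma main_count (hno : ∀ x y : V, x ≠ y → bLine B x y ≠ Set.univ)
    (h2 : 2 ≤ Fintype.card V) :
    Fintype.card V * Fintype.card V ≤ 1024 * (bLines B).ncard ^ 5 := by
  classical
  set k := (bLines B).ncard with hkdef
  obtain ⟨x, y0, hxy⟩ := Fintype.exists_pair_of_one_lt_card (α := V) (by omega)
  have hk : 1 ≤ k := by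
    have hne : (bLines B).Nonempty := ⟨bLine B x y0, x, y0, hxy, rfl⟩
    have := (Set.ncard_pos (Set.toFinite _)).2 hne
    omega
  set s : Finset V := Finset.univ.erase x with hs
  have hscard : s.card = Fintype.card V - 1 := by
    rw [hs, Finset.card_erase_of_mem (Finset.mem_univ x), Finset.card_univ]
  set W := Nat.sqrt (9 * k) with hW
  have hclassbound : ∀ Nval ∈ s.image (fun y => bLine B x y),
      (s.filter fun y => bLine B x y = Nval).card ≤ (2 * k + 1) * W := by
    intro Nval _
    apply class_card_le m0 m1 m2 m3 hno hk x Nval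
    · intro y hy
      have := (Finset.mem_filter.1 hy).1
      rw [hs] at this
      exact Finset.ne_of_mem_erase this
    · intro y hy
      exact (Finset.mem_filter.1 hy).2
  have h1 : s.card ≤ ((2 * k + 1) * W) * (s.image (fun y => bLine B x y)).card :=
    card_le_bound_mul s (fun y => bLine B x y) _ hclassbound
  have himg : (s.image (fun y => bLine B x y)).card ≤ k := by
    apply image_card_le_ncard
    intro y hy
    rw [hs] at hy
    exact bLine_mem_bLines (Ne.symm (Finset.ne_of_mem_erase hy))
  have hmain : Fintype.card V - 1 ≤ (2 * k + 1) * W * k := by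
    calc Fintype.card V - 1 = s.card := hscard.symm
      _ ≤ ((2 * k + 1) * W) * (s.image (fun y => bLine B x y)).card := h1
      _ ≤ (2 * k + 1) * W * k := Nat.mul_le_mul_left _ himg
  have hn2 : Fintype.card V ≤ 2 * ((2 * k + 1) * W * k) := by omega
  have hWsq : W * W ≤ 9 * k := by rw [hW]; exact Nat.sqrt_le _
  have h3 : (2 * k + 1) ≤ 3 * k := by omega
  calc Fintype.card V * Fintype.card V
      ≤ (2 * ((2 * k + 1) * W * k)) * (2 * ((2 * k + 1) * W * k)) := Nat.mul_le_mul hn2 hn2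
    _ = 4 * ((2 * k + 1) * (2 * k + 1)) * (W * W) * (k * k) := by ring
    _ ≤ 4 * ((3 * k) * (3 * k)) * (9 * k) * (k * k) := by
        have e1 : (2 * k + 1) * (2 * k + 1) ≤ (3 * k) * (3 * k) := Nat.mul_le_mul h3 h3
        exact Nat.mul_le_mul (Nat.mul_le_mul (Nat.mul_le_mul_left 4 e1) hWsq) (le_refl _)
    _ = 324 * k ^ 5 := by ring
    _ ≤ 1024 * k ^ 5 := Nat.mul_le_mul_right _ (by omega)

end Axioms

end Stmt18Aux

theorem stmt_18 :
    ∃ c : ℝ, 0 < c ∧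
      ∀ (V : Type) [Fintype V] (B : V → V → V → Prop),
        IsPseudometricBetweenness B → 2 ≤ Fintype.card V →
        (c * (Fintype.card V : ℝ) ^ ((2 : ℝ) / 5) ≤ ((bLines B).ncard : ℝ) ∨
          ∃ x y : V, x ≠ y ∧ bLine B x y = Set.univ) := by
  refine ⟨1 / 4, by norm_num, ?_⟩
  intro V _ B hB h2
  by_cases huniv : ∃ x y : V, x ≠ y ∧ bLine B x y = Set.univ
  · exact Or.inr huniv
  · left
    push_neg at huniv
    obtain ⟨m0, m1, m2, m3⟩ := hB
    have hno : ∀ x y : V, x ≠ y → bLine B x y ≠ Set.univ := fun x y h => huniv x y h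
    have hmain := Stmt18Aux.main_count m0 m1 m2 m3 hno h2
    set n := Fintype.card V with hn
    set k := (bLines B).ncard with hk
    have hkR : (0:ℝ) ≤ (k:ℝ) := by positivity
    have hnR : ((n:ℝ)) ^ (2:ℕ) ≤ (4 * (k:ℝ)) ^ (5:ℕ) := by
      have hcast : ((n:ℝ)) * ((n:ℝ)) ≤ 1024 * (k:ℝ) ^ (5:ℕ) := by
        exact_mod_cast hmain
      calc ((n:ℝ)) ^ (2:ℕ) = (n:ℝ) * (n:ℝ) := sq (n:ℝ) ▸ by ring
        _ ≤ 1024 * (k:ℝ) ^ (5:ℕ) := hcast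
        _ = (4 * (k:ℝ)) ^ (5:ℕ) := by ring
    have h25 : (n:ℝ) ^ ((2:ℝ) / 5) ≤ 4 * (k:ℝ) := by
      have hn0 : (0:ℝ) ≤ (n:ℝ) := by positivity
      have hb0 : (0:ℝ) ≤ 4 * (k:ℝ) := by positivity
      have step : ((n:ℝ) ^ ((2:ℝ))) ^ ((1:ℝ)/5) ≤ ((4*(k:ℝ)) ^ ((5:ℝ))) ^ ((1:ℝ)/5) := by
        apply Real.rpow_le_rpow (by positivity) ?_ (by norm_num)
        rw [show ((2:ℝ)) = ((2:ℕ):ℝ) by norm_num, show ((5:ℝ)) = ((5:ℕ):ℝ) by norm_num,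
          Real.rpow_natCast, Real.rpow_natCast]
        exact hnR
      calc (n:ℝ) ^ ((2:ℝ)/5) = ((n:ℝ) ^ ((2:ℝ))) ^ ((1:ℝ)/5) := by
            rw [← Real.rpow_mul hn0]; norm_num
        _ ≤ ((4*(k:ℝ)) ^ ((5:ℝ))) ^ ((1:ℝ)/5) := step
        _ = 4 * (k:ℝ) := by
            rw [← Real.rpow_mul hb0]; norm_num
    linarith
end
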